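/- arXiv:2401.15373 — 3 statements merged into one kernel-verified Lean document; each statement's English description precedes it below -/
import Mathlib

section
/- Let (X,d,μ) be a Borel metric measure space in which every closed ball has positive finite measure, fix r > 0, and suppose that X is s-doubling for every s ≥ r, has the Vitali covering property, and satisfies μ(B(x,r) △ B(y,r)) → 0 as y → x for each point x ∈ X. Let p ∈ (1,∞) and q ∈ [1,∞]. Then the averaging operator A_r : L^{p,q}(X) → L^{p,q}(X) is compact (i.e., maps ‖·‖_{p,q}-bounded sets to totally bounded sets) if and only if X is bounded. -/
/-!
If `X` is unbounded, choose centres `uₙ` at mutual distance `> 4r` and let `fₙ` be the indicator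
of `B(uₙ, 2r)` with height `cₙ = μ(B(uₙ, 2r))^{-1/p}`, so that `‖fₙ‖_{p,q}` is bounded. On
`B(uₙ, r)` the average `A_r fₙ` equals `cₙ` while `A_r fₘ` vanishes, so for any `g` one of
`A_r fₙ - g`, `A_r fₘ - g` exceeds `cₙ/4` at each point of `B(uₙ, r)`. If both had small
Lorentz norm, the weak-type bound `t^{1/p} f*(t) ≲ ‖f‖_{p,q}` would make both level sets
smaller than `μ(B(uₙ, 2r))/(4γ) ≤ μ(B(uₙ, r))/4`, which is absurd; by pigeonhole no finite
net exists.

If `X` is bounded, `μ` is finite and doubling gives `μ(B(x, r)) ≥ η > 0`. A bounded family in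
`L^{p,q}` is bounded in weak `L^p`, hence uniformly integrable since `p > 1`, so the averages
`A_r f` are uniformly bounded and uniformly continuous with respect to `μ(B(x,r) △ B(y,r))`.
The Vitali property and the continuity of `y ↦ μ(B(x,r) △ B(y,r))` give finitely many balls on
each of which this quantity is small, covering `X` up to measure `β`. The values of `A_r f` at
their centres form a bounded subset of a finite-dimensional space, so finitely many `A_r f'`
approximate every `A_r f` within `β` off a set of measure `β`, and such a difference, bounded by
`M` everywhere, has `‖·‖_{p,q} ≲ M β^{1/p} + β μ(X)^{1/p}`.
-/

open MeasureTheory Metric Filter Set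

/-- The averaging operator `A_r f(x) = (1/μ(B(x,r))) ∫_{B(x,r)} f dμ`. -/
noncomputable def avgOp {X : Type*} [MeasurableSpace X] [PseudoMetricSpace X]
    (μ : Measure X) (r : ℝ) (f : X → ℝ) (x : X) : ℝ :=
  (μ (closedBall x r)).toReal⁻¹ * ∫ y in closedBall x r, f y ∂μ

/-- `X` is `s`-doubling: there is `γ ≥ 1` with `μ(B(x,2s)) ≤ γ μ(B(x,s))` for all `x`. -/
def DoublingAt {X : Type*} [PseudoMetricSpace X] [MeasurableSpace X]
    (μ : MeasureTheory.Measure X) (s : ℝ) : Prop :=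
  ∃ γ : ℝ, 1 ≤ γ ∧ ∀ x : X,
    μ (closedBall x (2 * s)) ≤ ENNReal.ofReal γ * μ (closedBall x s)

/-- `X` has the Vitali covering property: for every `A ⊆ X` and every family `𝓑` of
closed balls (coded as center–radius pairs) centered in `A`, with positive radii that
are uniformly bounded, such that every `x ∈ A` is the center of balls of `𝓑` of
arbitrarily small radius, there is a countable pairwise disjoint subfamily `𝓑' ⊆ 𝓑`
with `μ(A \ ⋃ 𝓑') = 0`. -/
def VitaliCoveringProperty (X : Type*) [PseudoMetricSpace X] [MeasurableSpace X]
    (μ : MeasureTheory.Measure X) : Prop :=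
  ∀ (A : Set X) (ℬ : Set (X × ℝ)),
    (∀ b ∈ ℬ, b.1 ∈ A ∧ 0 < b.2) →
    (∃ R : ℝ, ∀ b ∈ ℬ, b.2 ≤ R) →
    (∀ x ∈ A, ∀ ε > 0, ∃ s : ℝ, 0 < s ∧ s ≤ ε ∧ (x, s) ∈ ℬ) →
    ∃ ℬ' ⊆ ℬ, ℬ'.Countable ∧
      (ℬ'.Pairwise fun b b' => Disjoint (closedBall b.1 b.2) (closedBall b'.1 b'.2)) ∧
      μ (A \ ⋃ b ∈ ℬ', closedBall b.1 b.2) = 0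

/-- The distribution function `μ_f(t) = μ({x : |f(x)| > t})` of a function `f`. -/
noncomputable def distribFn {X : Type*} [MeasurableSpace X]
    (μ : MeasureTheory.Measure X) (f : X → ℝ) (t : ℝ) : ENNReal :=
  μ {x : X | t < |f x|}

/-- The decreasing rearrangement `f*(t) = inf{s ≥ 0 : μ_f(s) ≤ t}` of `f`
(with values in `[0,∞]`). -/
noncomputable def rearr {X : Type*} [MeasurableSpace X]
    (μ : MeasureTheory.Measure X) (f : X → ℝ) (t : ℝ) : ENNReal :=
  sInf {s : ENNReal | μ {x : X | s < ENNReal.ofReal |f x|} ≤ ENNReal.ofReal t}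

/-- The maximal rearrangement `f**(t) = (1/t) ∫_0^t f*(s) ds`. -/
noncomputable def rearr2 {X : Type*} [MeasurableSpace X]
    (μ : MeasureTheory.Measure X) (f : X → ℝ) (t : ℝ) : ENNReal :=
  (ENNReal.ofReal t)⁻¹ * ∫⁻ s in Set.Ioc (0 : ℝ) t, rearr μ f s

/-- The Lorentz norm `‖f‖_{p,q}`, for `p, q ∈ [1,∞]`:
`(∫_0^∞ t^{q/p−1} f*(t)^q dt)^{1/q}` if `q < ∞`, and `sup_{t>0} t^{1/p} f*(t)` if
`q = ∞` (with the conventions `q/∞ = 0` and `1/∞ = 0` on the exponents). -/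
noncomputable def lorentzNorm {X : Type*} [MeasurableSpace X]
    (μ : MeasureTheory.Measure X) (f : X → ℝ) (p q : ENNReal) : ENNReal :=
  if q = ⊤ then ⨆ t ∈ Set.Ioi (0 : ℝ), ENNReal.ofReal (t ^ (1 / p.toReal)) * rearr μ f t
  else (∫⁻ t in Set.Ioi (0 : ℝ),
    ENNReal.ofReal (t ^ (q.toReal / p.toReal - 1)) * rearr μ f t ^ q.toReal) ^ (1 / q.toReal)

/-- The Lorentz norm `‖f‖_{(p,q)}`, defined as `‖f‖_{p,q}` with `f**` replacing `f*`. -/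
noncomputable def lorentzNorm' {X : Type*} [MeasurableSpace X]
    (μ : MeasureTheory.Measure X) (f : X → ℝ) (p q : ENNReal) : ENNReal :=
  if q = ⊤ then ⨆ t ∈ Set.Ioi (0 : ℝ), ENNReal.ofReal (t ^ (1 / p.toReal)) * rearr2 μ f t
  else (∫⁻ t in Set.Ioi (0 : ℝ),
    ENNReal.ofReal (t ^ (q.toReal / p.toReal - 1)) * rearr2 μ f t ^ q.toReal) ^ (1 / q.toReal)

open scoped ENNReal Topology symmDiff

section Rearrangement

variable {X : Type*} [MeasurableSpace X] {μ : Measure X} {f : X → ℝ}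

lemma rearr_le_ofReal {l t : ℝ} (hl : 0 ≤ l) (h : μ {x | l < |f x|} ≤ ENNReal.ofReal t) :
    rearr μ f t ≤ ENNReal.ofReal l :=
  sInf_le <| by simpa only [Set.mem_ofPred_eq, ENNReal.ofReal_lt_ofReal_iff_of_nonneg hl] using h

lemma ofReal_le_rearr {l t : ℝ} (h : ENNReal.ofReal t < μ {x | l < |f x|}) :
    ENNReal.ofReal l ≤ rearr μ f t := by
  refine le_sInf fun s hs => ?_
  by_contra! hs'
  have hsub : {x | l < |f x|} ⊆ {x | s < ENNReal.ofReal |f x|} := fun x hx =>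
    hs'.trans_le (ENNReal.ofReal_le_ofReal (le_of_lt hx))
  exact (h.trans_le ((measure_mono hsub).trans hs)).false

lemma rearr_antitone : Antitone (rearr μ f) := fun _ _ h =>
  sInf_le_sInf fun _ hs => hs.trans (ENNReal.ofReal_le_ofReal h)

end Rearrangement

lemma lintegral_Ioc_ofReal_rpow_sub_one {a : ℝ} (ha : 0 < a) {b : ℝ} (hb : 0 ≤ b) :
    ∫⁻ t in Ioc 0 b, ENNReal.ofReal (t ^ (a - 1)) = ENNReal.ofReal (b ^ a / a) := by
  rw [← ofReal_integral_eq_lintegral_ofReal, ← intervalIntegral.integral_of_le hb,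
    integral_rpow (Or.inl (by linarith))]
  · norm_num [Real.zero_rpow ha.ne']
  · exact (intervalIntegral.intervalIntegrable_rpow' (by linarith)).1
  · filter_upwards [ae_restrict_mem measurableSet_Ioc] with t ht
    exact Real.rpow_nonneg ht.1.le _

section Lorentz

variable {X : Type*} [MeasurableSpace X] {μ : Measure X} {f : X → ℝ} {p q : ℝ≥0∞}

/-- The Lorentz norm of the indicator of a set of measure one. -/
noncomputable def lorentzConst (p q : ℝ≥0∞) : ℝ :=
  if q = ⊤ then 1 else (p.toReal / q.toReal) ^ (1 / q.toReal)

lemma lorentzConst_pos (hp : 0 < p.toReal) : 0 < lorentzConst p q := by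
  unfold lorentzConst
  split_ifs
  · exact one_pos
  · rcases eq_or_lt_of_le (ENNReal.toReal_nonneg (a := q)) with hq | hq
    · simp [← hq]
    · positivity

lemma lorentzConst_mul_eq_rpow (hp : 0 < p.toReal) (hq : q ≠ 0) (hq' : q ≠ ⊤) {a b : ℝ}
    (ha : 0 ≤ a) (hb : 0 ≤ b) :
    lorentzConst p q * (a * b ^ (1 / p.toReal)) =
      (a ^ q.toReal * (b ^ (q.toReal / p.toReal) / (q.toReal / p.toReal))) ^ (1 / q.toReal) := by
  have hq₀ : 0 < q.toReal := ENNReal.toReal_pos hq hq'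
  have hexp : q.toReal / p.toReal * (1 / q.toReal) = 1 / p.toReal := by field_simp
  rw [lorentzConst, if_neg hq', div_div_eq_mul_div, mul_div_assoc,
    Real.mul_rpow (by positivity) (by positivity), Real.mul_rpow (by positivity) (by positivity),
    ← Real.rpow_mul ha, ← Real.rpow_mul hb, mul_one_div_cancel hq₀.ne', Real.rpow_one, hexp]
  ring

lemma ofReal_lorentzConst_mul_rearr_le (hp : 0 < p.toReal) (hq : q ≠ 0) {t : ℝ} (ht : 0 < t) :
    ENNReal.ofReal (lorentzConst p q * t ^ (1 / p.toReal)) * rearr μ f t ≤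
      lorentzNorm μ f p q := by
  by_cases hq' : q = ⊤
  · rw [lorentzNorm, if_pos hq', lorentzConst, if_pos hq', one_mul]
    exact le_iSup₂ (f := fun t (_ : t ∈ Ioi (0 : ℝ)) =>
      ENNReal.ofReal (t ^ (1 / p.toReal)) * rearr μ f t) t ht
  have hq₀ : 0 < q.toReal := ENNReal.toReal_pos hq hq'
  set α := q.toReal / p.toReal
  have key : rearr μ f t ^ q.toReal * ENNReal.ofReal (t ^ α / α) ≤
      ∫⁻ s in Ioi 0, ENNReal.ofReal (s ^ (α - 1)) * rearr μ f s ^ q.toReal := by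
    rw [← lintegral_Ioc_ofReal_rpow_sub_one (by positivity) ht.le]
    calc _ ≤ ∫⁻ s in Ioc 0 t, rearr μ f t ^ q.toReal * ENNReal.ofReal (s ^ (α - 1)) :=
          lintegral_const_mul_le _ _
      _ ≤ ∫⁻ s in Ioc 0 t, ENNReal.ofReal (s ^ (α - 1)) * rearr μ f s ^ q.toReal :=
          setLIntegral_mono' measurableSet_Ioc fun s hs => by
            rw [mul_comm]; gcongr; exact rearr_antitone hs.2
      _ ≤ _ := lintegral_mono_set Ioc_subset_Ioi_self
  rw [lorentzNorm, if_neg hq', ← one_mul (t ^ (1 / p.toReal)),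
    lorentzConst_mul_eq_rpow hp hq hq' zero_le_one ht.le, Real.one_rpow, one_mul,
    ← ENNReal.ofReal_rpow_of_nonneg (by positivity) (by positivity)]
  calc _ = (rearr μ f t ^ q.toReal * ENNReal.ofReal (t ^ α / α)) ^ (1 / q.toReal) := by
        rw [ENNReal.mul_rpow_of_nonneg _ _ (by positivity), ← ENNReal.rpow_mul,
          mul_one_div_cancel hq₀.ne', ENNReal.rpow_one, mul_comm]
    _ ≤ _ := ENNReal.rpow_le_rpow key (by positivity)

lemma lintegral_rpow_mul_rearr_rpow_le {s α : ℝ} (hs : 0 < s) (hα : 0 < α) {a b c m : ℝ}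
    (ha : 0 ≤ a) (hb : 0 ≤ b) (hc : 0 ≤ c) (hm : 0 ≤ m)
    (h₁ : ∀ t, 0 < t → rearr μ f t ≤ ENNReal.ofReal a)
    (h₂ : ∀ t, b < t → rearr μ f t ≤ ENNReal.ofReal c)
    (h₃ : ∀ t, m ≤ t → rearr μ f t = 0) :
    ∫⁻ t in Ioi 0, ENNReal.ofReal (t ^ (α - 1)) * rearr μ f t ^ s ≤
      ENNReal.ofReal (a ^ s * (b ^ α / α)) + ENNReal.ofReal (c ^ s * (m ^ α / α)) := by
  set w : ℝ → ℝ≥0∞ := fun t => ENNReal.ofReal (t ^ (α - 1))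
  have hw : Measurable w := by fun_prop
  have hpt : ∀ t ∈ Ioi (0 : ℝ), w t * rearr μ f t ^ s ≤
      (Ioc 0 b).indicator (fun t => ENNReal.ofReal (a ^ s) * w t) t +
        (Ioc 0 m).indicator (fun t => ENNReal.ofReal (c ^ s) * w t) t := by
    intro t (ht : 0 < t)
    rcases le_or_gt t b with htb | htb
    · rw [indicator_of_mem (show t ∈ Ioc 0 b from ⟨ht, htb⟩),
        ← ENNReal.ofReal_rpow_of_nonneg ha hs.le, mul_comm]
      exact le_add_right (by gcongr; exact h₁ t ht)
    rcases lt_or_ge t m with htm | htm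
    · rw [indicator_of_mem (show t ∈ Ioc 0 m from ⟨ht, htm.le⟩),
        ← ENNReal.ofReal_rpow_of_nonneg hc hs.le, mul_comm]
      exact le_add_left (by gcongr; exact h₂ t htb)
    · simp [h₃ t htm, hs]
  refine (setLIntegral_mono' measurableSet_Ioi hpt).trans_eq ?_
  rw [lintegral_add_left ((hw.const_mul _).indicator measurableSet_Ioc),
    setLIntegral_indicator measurableSet_Ioc, setLIntegral_indicator measurableSet_Ioc,
    inter_eq_left.mpr Ioc_subset_Ioi_self, inter_eq_left.mpr Ioc_subset_Ioi_self,
    lintegral_const_mul _ hw, lintegral_const_mul _ hw,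
    lintegral_Ioc_ofReal_rpow_sub_one hα hb, lintegral_Ioc_ofReal_rpow_sub_one hα hm,
    ← ENNReal.ofReal_mul (by positivity), ← ENNReal.ofReal_mul (by positivity)]

lemma lorentzNorm_le_of_rearr_le (hp : 0 < p.toReal) (hq : 1 ≤ q) {a b c m : ℝ}
    (ha : 0 ≤ a) (hb : 0 ≤ b) (hc : 0 ≤ c) (hm : 0 ≤ m)
    (h₁ : ∀ t, 0 < t → rearr μ f t ≤ ENNReal.ofReal a)
    (h₂ : ∀ t, b < t → rearr μ f t ≤ ENNReal.ofReal c)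
    (h₃ : ∀ t, m ≤ t → rearr μ f t = 0) :
    lorentzNorm μ f p q ≤
      ENNReal.ofReal (lorentzConst p q * (a * b ^ (1 / p.toReal) + c * m ^ (1 / p.toReal))) := by
  by_cases hq' : q = ⊤
  · rw [lorentzNorm, if_pos hq', lorentzConst, if_pos hq', one_mul,
      ENNReal.ofReal_add (by positivity) (by positivity)]
    refine iSup₂_le fun t (ht : 0 < t) => ?_
    rcases le_or_gt t b with htb | htb
    · refine le_add_right ?_
      rw [mul_comm a, ENNReal.ofReal_mul (by positivity)]
      gcongr
      exact h₁ t ht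
    rcases lt_or_ge t m with htm | htm
    · refine le_add_left ?_
      rw [mul_comm c, ENNReal.ofReal_mul (by positivity)]
      gcongr
      exact h₂ t htb
    · simp [h₃ t htm]
  have hq₁ : 1 ≤ q.toReal := by simpa using ENNReal.toReal_mono hq' hq
  have hq₀ : 0 < q.toReal := zero_lt_one.trans_le hq₁
  have hq0 : q ≠ 0 := (zero_lt_one.trans_le hq).ne'
  have hκ := (lorentzConst_pos (q := q) hp).le
  rw [lorentzNorm, if_neg hq', mul_add, ENNReal.ofReal_add (by positivity) (by positivity),
    lorentzConst_mul_eq_rpow hp hq0 hq' ha hb, lorentzConst_mul_eq_rpow hp hq0 hq' hc hm,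
    ← ENNReal.ofReal_rpow_of_nonneg (by positivity) (by positivity),
    ← ENNReal.ofReal_rpow_of_nonneg (by positivity) (by positivity)]
  exact (ENNReal.rpow_le_rpow (lintegral_rpow_mul_rearr_rpow_le hq₀ (by positivity)
    ha hb hc hm h₁ h₂ h₃) (by positivity)).trans
    (ENNReal.rpow_add_le_add_rpow _ _ (by positivity) ((div_le_one hq₀).mpr hq₁))

lemma lorentzNorm_le_of_abs_le (hp : 0 < p.toReal) (hq : 1 ≤ q) {S T : Set X} {a b c m : ℝ}
    (ha : 0 ≤ a) (hb : 0 ≤ b) (hc : 0 ≤ c) (hm : 0 ≤ m) (hfa : ∀ x, |f x| ≤ a)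
    (hS : μ S ≤ ENNReal.ofReal b) (hfc : ∀ x ∉ S, |f x| ≤ c)
    (hT : μ T ≤ ENNReal.ofReal m) (hf0 : ∀ x ∉ T, f x = 0) :
    lorentzNorm μ f p q ≤
      ENNReal.ofReal (lorentzConst p q * (a * b ^ (1 / p.toReal) + c * m ^ (1 / p.toReal))) := by
  refine lorentzNorm_le_of_rearr_le hp hq ha hb hc hm (fun t _ => ?_) (fun t ht => ?_)
    (fun t ht => ?_)
  · refine rearr_le_ofReal ha ?_
    simp [fun x => not_lt.mpr (hfa x)]
  · refine rearr_le_ofReal hc ((measure_mono fun x hx => ?_).trans (hS.trans ?_))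
    · by_contra hxS
      exact (hfc x hxS).not_gt hx
    · exact ENNReal.ofReal_le_ofReal ht.le
  · refine nonpos_iff_eq_zero.mp ((rearr_le_ofReal le_rfl ?_).trans_eq ENNReal.ofReal_zero)
    refine (measure_mono fun x hx => ?_).trans (hT.trans (ENNReal.ofReal_le_ofReal ht))
    by_contra hxT
    simp [hf0 x hxT] at hx

lemma lorentzNorm_sub_le_of_abs_le [IsFiniteMeasure μ] (hp : 0 < p.toReal) (hq : 1 ≤ q)
    {g h : X → ℝ} {M β : ℝ} (hM : 0 ≤ M) (hβ : 0 ≤ β) (hg : ∀ x, |g x| ≤ M)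
    (hh : ∀ x, |h x| ≤ M) {S : Set X} (hS : μ S ≤ ENNReal.ofReal β)
    (hgh : ∀ x ∉ S, |g x - h x| ≤ β) :
    lorentzNorm μ (g - h) p q ≤ ENNReal.ofReal (lorentzConst p q *
      (2 * M * β ^ (1 / p.toReal) + β * μ.real univ ^ (1 / p.toReal))) :=
  lorentzNorm_le_of_abs_le hp hq (T := univ) (by positivity) hβ hβ measureReal_nonneg
    (fun x => (abs_sub _ _).trans (by linarith [hg x, hh x])) hS hgh
    (ofReal_measureReal (measure_ne_top μ univ)).ge (fun x hx => absurd (mem_univ x) hx)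

lemma exists_pos_lorentzConst_mul_lt (q : ℝ≥0∞) (hp : 0 < p.toReal) (a m : ℝ) {e : ℝ}
    (he : 0 < e) :
    ∃ β > 0, lorentzConst p q * (a * β ^ (1 / p.toReal) + β * m ^ (1 / p.toReal)) < e := by
  have hcont : ContinuousAt
      (fun β : ℝ => lorentzConst p q * (a * β ^ (1 / p.toReal) + β * m ^ (1 / p.toReal))) 0 :=
    continuousAt_const.mul ((continuousAt_const.mul
      (Real.continuousAt_rpow_const _ _ (Or.inr (by positivity)))).add
      (continuousAt_id.mul continuousAt_const))
  have hlim := hcont.tendsto.mono_left (nhdsWithin_le_nhds (s := Ioi 0))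
  rw [Real.zero_rpow (by positivity)] at hlim
  simp only [mul_zero, zero_mul, add_zero] at hlim
  exact ((hlim.eventually (gt_mem_nhds he)).and self_mem_nhdsWithin).exists.imp
    fun β h => ⟨h.2, h.1⟩

noncomputable def normIndicator (μ : Measure X) (p : ℝ) (S : Set X) : X → ℝ :=
  S.indicator fun _ => (μ.real S ^ (1 / p))⁻¹

lemma lorentzNorm_normIndicator_le (hp : 0 < p.toReal) (hq : 1 ≤ q) {S : Set X}
    (hS₀ : μ S ≠ 0) (hS : μ S ≠ ⊤) :
    lorentzNorm μ (normIndicator μ p.toReal S) p q ≤ ENNReal.ofReal (lorentzConst p q) := by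
  have hb : 0 < μ.real S := ENNReal.toReal_pos hS₀ hS
  have hc : 0 < (μ.real S ^ (1 / p.toReal))⁻¹ := by positivity
  have hind : ∀ x, |S.indicator (fun _ => (μ.real S ^ (1 / p.toReal))⁻¹) x| ≤
      (μ.real S ^ (1 / p.toReal))⁻¹ := fun x => by
    by_cases hx : x ∈ S
    · rw [indicator_of_mem hx, abs_of_pos hc]
    · rw [indicator_of_notMem hx, abs_zero]; exact hc.le
  refine (lorentzNorm_le_of_abs_le hp hq hc.le hb.le le_rfl hb.le hind
    (ofReal_measureReal hS).ge (fun x hx => by simp [hx]) (ofReal_measureReal hS).ge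
    (fun x hx => indicator_of_notMem hx _)).trans_eq ?_
  rw [inv_mul_cancel₀ (by positivity), zero_mul, add_zero, mul_one]

end Lorentz

section WeakType

variable {X : Type*} [MeasurableSpace X] {μ : Measure X} {f : X → ℝ} {p K : ℝ}

def WeakLpBound (μ : Measure X) (p K : ℝ) (f : X → ℝ) : Prop :=
  ∀ l, 0 < l → μ {x | l < |f x|} ≤ ENNReal.ofReal ((K / l) ^ p)

lemma weakLpBound_of_lorentzNorm_le {p q : ℝ≥0∞} (hp : 0 < p.toReal) (hq : q ≠ 0) {N : ℝ}
    (hN : 0 ≤ N) (hf : lorentzNorm μ f p q ≤ ENNReal.ofReal N) :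
    WeakLpBound μ p.toReal (N / lorentzConst p q) f := by
  have hκ := lorentzConst_pos (q := q) hp
  intro l hl
  rw [div_div]
  by_contra! h
  obtain ⟨t, -, hTt, htμ⟩ := ENNReal.lt_iff_exists_real_btwn.mp h
  have ht : (N / (lorentzConst p q * l)) ^ p.toReal < t :=
    (ENNReal.ofReal_lt_ofReal_iff'.mp hTt).1
  have ht0 : 0 < t := lt_of_le_of_lt (by positivity) ht
  have hbound : lorentzConst p q * t ^ (1 / p.toReal) * l ≤ N := by
    rw [← ENNReal.ofReal_le_ofReal_iff hN, ENNReal.ofReal_mul (by positivity)]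
    calc _ ≤ ENNReal.ofReal (lorentzConst p q * t ^ (1 / p.toReal)) * rearr μ f t := by
          gcongr; exact ofReal_le_rearr htμ
      _ ≤ ENNReal.ofReal N := (ofReal_lorentzConst_mul_rearr_le hp hq ht0).trans hf
  have : t ^ p.toReal⁻¹ ≤ N / (lorentzConst p q * l) := by
    rw [le_div_iff₀ (by positivity), ← one_div]; linarith
  exact ((Real.rpow_inv_le_iff_of_pos ht0.le (by positivity) hp).mp this).not_gt ht

lemma lintegral_Ioi_ofReal_rpow_neg (hp : 1 < p) {Λ : ℝ} (hΛ : 0 < Λ) :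
    ∫⁻ l in Ioi Λ, ENNReal.ofReal (l ^ (-p)) = ENNReal.ofReal (Λ ^ (1 - p) / (p - 1)) := by
  rw [← ofReal_integral_eq_lintegral_ofReal (integrableOn_Ioi_rpow_of_lt (by linarith) hΛ),
    integral_Ioi_rpow_of_lt (by linarith) hΛ]
  · congr 1
    rw [show -p + 1 = -(p - 1) by ring, div_neg, neg_div, neg_neg, neg_sub]
  · filter_upwards [ae_restrict_mem measurableSet_Ioi] with l hl
    exact Real.rpow_nonneg (hΛ.trans hl).le _

lemma WeakLpBound.setLIntegral_abs_le (hweak : WeakLpBound μ p K f) (hp : 1 < p) (hK : 0 ≤ K)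
    (hf : AEMeasurable f μ) (E : Set X) {Λ : ℝ} (hΛ : 0 < Λ) :
    ∫⁻ x in E, ENNReal.ofReal |f x| ∂μ ≤
      ENNReal.ofReal Λ * μ E + ENNReal.ofReal (K ^ p * Λ ^ (1 - p) / (p - 1)) := by
  rw [lintegral_eq_lintegral_meas_lt _ (ae_of_all _ fun x => abs_nonneg _) hf.abs.restrict,
    ← Ioc_union_Ioi_eq_Ioi hΛ.le, lintegral_union measurableSet_Ioi Ioc_disjoint_Ioi_same]
  gcongr
  · calc _ ≤ ∫⁻ _ in Ioc 0 Λ, μ E :=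
          lintegral_mono fun l =>
            (measure_mono (subset_univ _)).trans_eq (Measure.restrict_apply_univ E)
      _ = _ := by rw [setLIntegral_const, Real.volume_Ioc, sub_zero, mul_comm]
  · calc _ ≤ ∫⁻ l in Ioi Λ, ENNReal.ofReal (K ^ p) * ENNReal.ofReal (l ^ (-p)) :=
          setLIntegral_mono' measurableSet_Ioi fun l (hl : Λ < l) => by
            have hl0 : 0 < l := hΛ.trans hl
            rw [← ENNReal.ofReal_mul (by positivity), Real.rpow_neg hl0.le, ← div_eq_mul_inv,
              ← Real.div_rpow hK hl0.le]
            exact (Measure.restrict_apply_le _ _).trans (hweak l hl0)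
      _ = _ := by
          rw [lintegral_const_mul' _ _ ENNReal.ofReal_ne_top, lintegral_Ioi_ofReal_rpow_neg hp hΛ,
            ← ENNReal.ofReal_mul (by positivity), mul_div_assoc]

lemma exists_pos_forall_setLIntegral_abs_le (hp : 1 < p) (hK : 0 ≤ K) {τ : ℝ} (hτ : 0 < τ) :
    ∃ δ > 0, ∀ f : X → ℝ, AEMeasurable f μ → WeakLpBound μ p K f →
      ∀ E, μ E ≤ ENNReal.ofReal δ → ∫⁻ x in E, ENNReal.ofReal |f x| ∂μ ≤ ENNReal.ofReal τ := by
  have htail : Tendsto (fun Λ : ℝ => K ^ p * Λ ^ (1 - p) / (p - 1)) atTop (𝓝 0) := by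
    simpa [neg_sub] using
      ((tendsto_rpow_neg_atTop (by linarith : 0 < p - 1)).const_mul (K ^ p)).div_const (p - 1)
  obtain ⟨Λ, hΛ, hΛτ⟩ :=
    ((eventually_gt_atTop 0).and (htail.eventually (gt_mem_nhds (half_pos hτ)))).exists
  refine ⟨τ / 2 / Λ, by positivity, fun f hf hweak E hE => ?_⟩
  refine (hweak.setLIntegral_abs_le hp hK hf E hΛ).trans ?_
  calc _ ≤ ENNReal.ofReal Λ * ENNReal.ofReal (τ / 2 / Λ) + ENNReal.ofReal (τ / 2) :=
        add_le_add (by gcongr) (ENNReal.ofReal_le_ofReal hΛτ.le)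
    _ = ENNReal.ofReal τ := by
        rw [← ENNReal.ofReal_mul hΛ.le, mul_div_cancel₀ _ hΛ.ne',
          ← ENNReal.ofReal_add (by positivity) (by positivity), add_halves]

lemma WeakLpBound.lintegral_abs_le [IsFiniteMeasure μ] (hweak : WeakLpBound μ p K f) (hp : 1 < p)
    (hK : 0 ≤ K) (hf : AEMeasurable f μ) :
    ∫⁻ x, ENNReal.ofReal |f x| ∂μ ≤ ENNReal.ofReal (μ.real univ + K ^ p / (p - 1)) := by
  simpa [ENNReal.ofReal_add, div_nonneg, Real.rpow_nonneg hK, (by linarith : (0 : ℝ) ≤ p - 1)]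
    using hweak.setLIntegral_abs_le hp hK hf univ one_pos

lemma WeakLpBound.integrable [IsFiniteMeasure μ] (hweak : WeakLpBound μ p K f) (hp : 1 < p)
    (hK : 0 ≤ K) (hf : AEMeasurable f μ) : Integrable f μ :=
  ⟨hf.aestronglyMeasurable, by
    simpa only [HasFiniteIntegral, Real.enorm_eq_ofReal_abs] using
      (hweak.lintegral_abs_le hp hK hf).trans_lt ENNReal.ofReal_lt_top⟩

lemma WeakLpBound.integral_abs_le [IsFiniteMeasure μ] (hweak : WeakLpBound μ p K f) (hp : 1 < p)
    (hK : 0 ≤ K) (hf : AEMeasurable f μ) : ∫ x, |f x| ∂μ ≤ μ.real univ + K ^ p / (p - 1) := by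
  rw [integral_eq_lintegral_of_nonneg_ae (ae_of_all _ fun x => abs_nonneg _)
    hf.abs.aestronglyMeasurable]
  have hp' : 0 ≤ p - 1 := by linarith
  exact ENNReal.toReal_le_of_le_ofReal (by have := Real.rpow_nonneg hK p; positivity)
    (hweak.lintegral_abs_le hp hK hf)

end WeakType

section Averages

variable {X : Type*} [MeasurableSpace X] {μ : Measure X} {f : X → ℝ}

lemma abs_setIntegral_sub_setIntegral_le (hf : Integrable f μ) {A B : Set X}
    (hA : MeasurableSet A) (hB : MeasurableSet B) :
    |∫ x in A, f x ∂μ - ∫ x in B, f x ∂μ| ≤ ∫ x in A ∆ B, |f x| ∂μ := by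
  rw [← integral_inter_add_sdiff (s := A) hB hf.integrableOn,
    ← integral_inter_add_sdiff (s := B) hA hf.integrableOn,
    inter_comm B A, Set.symmDiff_def, setIntegral_union disjoint_sdiff_sdiff (hB.diff hA)
      hf.abs.integrableOn hf.abs.integrableOn, add_sub_add_left_eq_sub]
  exact (abs_sub _ _).trans (add_le_add abs_integral_le_integral_abs abs_integral_le_integral_abs)

lemma abs_inv_mul_setIntegral_sub_le (hf : Integrable f μ) {A B : Set X}
    (hA : MeasurableSet A) (hB : MeasurableSet B) {η : ℝ} (hη : 0 < η)
    (hηA : η ≤ μ.real A) (hηB : η ≤ μ.real B) :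
    |(μ.real A)⁻¹ * ∫ x in A, f x ∂μ - (μ.real B)⁻¹ * ∫ x in B, f x ∂μ| ≤
      (∫ x in A ∆ B, |f x| ∂μ) / η + μ.real (A ∆ B) * (∫ x, |f x| ∂μ) / η ^ 2 := by
  have hfin : ∀ {S : Set X}, η ≤ μ.real S → μ S ≠ ⊤ := fun {S} hS hS' => by
    simp [measureReal_def, hS'] at hS; linarith
  set a := μ.real A
  set b := μ.real B
  have ha : 0 < a := hη.trans_le hηA
  have hb : 0 < b := hη.trans_le hηB
  have hab : |b - a| ≤ μ.real (A ∆ B) := by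
    rw [abs_sub_comm]
    exact abs_measureReal_sub_le_measureReal_symmDiff' hA.nullMeasurableSet hB.nullMeasurableSet
      (hfin hηA) (hfin hηB)
  have hJ : |∫ x in B, f x ∂μ| ≤ ∫ x, |f x| ∂μ := abs_integral_le_integral_abs.trans
    (setIntegral_le_integral hf.abs (ae_of_all _ fun _ => abs_nonneg _))
  have hIJ := abs_setIntegral_sub_setIntegral_le hf hA hB
  calc _ = |a⁻¹ * (∫ x in A, f x ∂μ - ∫ x in B, f x ∂μ) +
        (b - a) / (a * b) * ∫ x in B, f x ∂μ| := by
        congr 1; field_simp; ring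
    _ ≤ a⁻¹ * |∫ x in A, f x ∂μ - ∫ x in B, f x ∂μ| +
        |b - a| / (a * b) * |∫ x in B, f x ∂μ| := by
        refine (abs_add_le _ _).trans_eq ?_
        rw [abs_mul, abs_mul, abs_div, abs_of_pos (mul_pos ha hb), abs_of_pos (inv_pos.mpr ha)]
    _ ≤ η⁻¹ * ∫ x in A ∆ B, |f x| ∂μ + μ.real (A ∆ B) / (η * η) * ∫ x, |f x| ∂μ := by
        gcongr
    _ = _ := by ring

end Averages

lemma exists_seq_lt_dist_of_not_isBounded {X : Type*} [PseudoMetricSpace X]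
    (hX : ¬Bornology.IsBounded (univ : Set X)) (c : ℝ) :
    ∃ u : ℕ → X, Pairwise fun i j => c < dist (u i) (u j) := by
  obtain ⟨u, -, hu⟩ := exists_seq_of_forall_finset_exists (fun _ : X => True)
    (fun x y => c < dist x y) fun s _ => by
      obtain ⟨y, -, hy⟩ := not_subset.mp fun h =>
        hX (((Bornology.isBounded_biUnion_finset s).2 fun x _ => isBounded_closedBall).subset h)
      refine ⟨y, trivial, fun x hx => ?_⟩
      simpa [dist_comm] using fun h => hy (mem_biUnion hx (mem_closedBall.mpr h))
  exact ⟨u, fun i j hij => hij.lt_or_gt.elim (hu i j) fun h => by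
    simpa only [dist_comm] using hu j i h⟩

section MetricMeasure

variable {X : Type*} [PseudoMetricSpace X] [MeasurableSpace X] {μ : Measure X} {r : ℝ}

lemma isFiniteMeasure_of_isBounded (hball : ∀ (x : X) (s : ℝ), 0 < s → μ (closedBall x s) < ⊤)
    (hX : Bornology.IsBounded (univ : Set X)) : IsFiniteMeasure μ := by
  refine ⟨?_⟩
  rcases isEmpty_or_nonempty X with hX₀ | ⟨⟨x₀⟩⟩
  · simp [univ_eq_empty_iff.mpr hX₀]
  obtain ⟨R, hR⟩ := (isBounded_iff_subset_closedBall x₀).mp hX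
  exact (measure_mono (hR.trans (closedBall_subset_closedBall (le_max_left R 1)))).trans_lt
    (hball x₀ _ (zero_lt_one.trans_le (le_max_right R 1)))

lemma exists_measure_closedBall_two_pow_mul_le (hdbl : ∀ s, r ≤ s → DoublingAt μ s)
    (hr : 0 ≤ r) (k : ℕ) :
    ∃ C : ℝ≥0∞, C ≠ ⊤ ∧ ∀ x, μ (closedBall x (2 ^ k * r)) ≤ C * μ (closedBall x r) := by
  induction k with
  | zero => exact ⟨1, ENNReal.one_ne_top, fun x => by simp⟩
  | succ k ih =>
    obtain ⟨C, hC, hCle⟩ := ih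
    obtain ⟨γ, -, hγ⟩ := hdbl (2 ^ k * r) (le_mul_of_one_le_left hr (one_le_pow₀ one_le_two))
    refine ⟨ENNReal.ofReal γ * C, ENNReal.mul_ne_top ENNReal.ofReal_ne_top hC, fun x => ?_⟩
    calc μ (closedBall x (2 ^ (k + 1) * r)) = μ (closedBall x (2 * (2 ^ k * r))) := by ring_nf
      _ ≤ ENNReal.ofReal γ * μ (closedBall x (2 ^ k * r)) := hγ x
      _ ≤ ENNReal.ofReal γ * C * μ (closedBall x r) := by rw [mul_assoc]; gcongr; exact hCle x

lemma exists_pos_le_measureReal_closedBall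
    (hball : ∀ (x : X) (s : ℝ), 0 < s → 0 < μ (closedBall x s) ∧ μ (closedBall x s) < ⊤)
    (hr : 0 < r) (hdbl : ∀ s, r ≤ s → DoublingAt μ s) (hX : Bornology.IsBounded (univ : Set X)) :
    ∃ η > 0, ∀ x, η ≤ μ.real (closedBall x r) := by
  rcases isEmpty_or_nonempty X with hX₀ | ⟨⟨x₀⟩⟩
  · exact ⟨1, one_pos, fun x => (IsEmpty.false x).elim⟩
  obtain ⟨D, hD⟩ := Metric.isBounded_iff.mp hX
  obtain ⟨k, hk⟩ := pow_unbounded_of_one_lt (D / r) one_lt_two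
  obtain ⟨C, hC, hCle⟩ := exists_measure_closedBall_two_pow_mul_le hdbl hr.le k
  have hx₀ := hball x₀ r hr
  have hcover : ∀ x, μ (closedBall x₀ r) ≤ C * μ (closedBall x r) := fun x =>
    (measure_mono fun y _ => mem_closedBall.mpr
      ((hD trivial trivial).trans ((div_lt_iff₀ hr).mp hk).le)).trans (hCle x)
  have hC₀ : 0 < C.toReal :=
    ENNReal.toReal_pos (fun h => by simpa [h] using hx₀.1.trans_le (hcover x₀)) hC
  refine ⟨μ.real (closedBall x₀ r) / C.toReal,
    div_pos (ENNReal.toReal_pos hx₀.1.ne' hx₀.2.ne) hC₀, fun x => ?_⟩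
  rw [div_le_iff₀' hC₀, measureReal_def, measureReal_def, ← ENNReal.toReal_mul]
  exact ENNReal.toReal_mono (ENNReal.mul_ne_top hC (hball x r hr).2.ne) (hcover x)

lemma avgOp_indicator_of_subset {s : Set X} (hs : MeasurableSet s) {x : X}
    (hx : closedBall x r ⊆ s) (hpos : μ (closedBall x r) ≠ 0) (hfin : μ (closedBall x r) ≠ ⊤)
    (c : ℝ) : avgOp μ r (s.indicator fun _ => c) x = c := by
  rw [avgOp, setIntegral_indicator hs, inter_eq_left.mpr hx, setIntegral_const, smul_eq_mul,
    measureReal_def, ← mul_assoc, inv_mul_cancel₀ (ENNReal.toReal_pos hpos hfin).ne', one_mul]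

lemma avgOp_indicator_of_disjoint {s : Set X} (hs : MeasurableSet s) {x : X}
    (hx : Disjoint (closedBall x r) s) (c : ℝ) : avgOp μ r (s.indicator fun _ => c) x = 0 := by
  rw [avgOp, setIntegral_indicator hs, hx.inter_eq, Measure.restrict_empty, integral_zero_measure,
    mul_zero]

lemma abs_avgOp_le {f : X → ℝ} (hf : Integrable f μ) {η : ℝ} (hη : 0 < η) {x : X}
    (hηx : η ≤ μ.real (closedBall x r)) : |avgOp μ r f x| ≤ (∫ y, |f y| ∂μ) / η := by
  rw [avgOp, abs_mul, abs_inv, ← measureReal_def, abs_of_pos (hη.trans_le hηx), inv_mul_eq_div]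
  exact div_le_div₀ (integral_nonneg fun _ => abs_nonneg _) (abs_integral_le_integral_abs.trans
    (setIntegral_le_integral hf.abs (ae_of_all _ fun _ => abs_nonneg _))) hη hηx

end MetricMeasure

lemma exists_finite_measure_compl_biUnion_lt {X ι : Type*} [MeasurableSpace X] {μ : Measure X}
    [IsFiniteMeasure μ] {s : Set ι} (hs : s.Countable) {T : ι → Set X}
    (hT : ∀ i, MeasurableSet (T i)) (hnull : μ (⋃ i ∈ s, T i)ᶜ = 0) {β : ℝ≥0∞} (hβ : 0 < β) :
    ∃ t ⊆ s, t.Finite ∧ μ (⋃ i ∈ t, T i)ᶜ < β := by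
  have := hs.to_subtype
  let U : Finset s → Set X := fun t => (⋃ i ∈ t, T i)ᶜ
  have hU : ⋂ t, U t = (⋃ i ∈ s, T i)ᶜ := by
    ext x
    simp only [U, mem_iInter, mem_compl_iff, mem_iUnion, not_exists, Subtype.forall]
    exact ⟨fun h i hi hx => h {⟨i, hi⟩} i hi (by simp) hx, fun h t i hi _ => h i hi⟩
  have hlim : Tendsto (μ ∘ U) atTop (𝓝 0) := by
    rw [← hnull, ← hU]
    exact tendsto_measure_iInter_atTop
      (fun t => (Finset.measurableSet_biUnion t fun i _ => hT i).compl.nullMeasurableSet)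
      (fun t t' h => compl_subset_compl.mpr (biUnion_subset_biUnion_left h))
      ⟨∅, measure_ne_top μ _⟩
  obtain ⟨t, ht⟩ := (hlim.eventually (gt_mem_nhds hβ)).exists
  refine ⟨(↑) '' (t : Set s), by simp, t.finite_toSet.image _, ?_⟩
  simpa [U, biUnion_image] using ht

lemma VitaliCoveringProperty.exists_finite_cover {X : Type*} [PseudoMetricSpace X]
    [MeasurableSpace X] [OpensMeasurableSpace X] {μ : Measure X} [IsFiniteMeasure μ]
    (hV : VitaliCoveringProperty X μ) {P : X → X → Prop} (hP : ∀ x, ∀ᶠ y in 𝓝 x, P x y)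
    {β : ℝ≥0∞} (hβ : 0 < β) :
    ∃ t : Set (X × ℝ), t.Finite ∧ (∀ b ∈ t, ∀ y ∈ closedBall b.1 b.2, P b.1 y) ∧
      μ (⋃ b ∈ t, closedBall b.1 b.2)ᶜ < β := by
  let ℬ : Set (X × ℝ) := {b | 0 < b.2 ∧ b.2 ≤ 1 ∧ ∀ y ∈ closedBall b.1 b.2, P b.1 y}
  have hfine : ∀ x ∈ univ, ∀ ε > 0, ∃ s, 0 < s ∧ s ≤ ε ∧ (x, s) ∈ ℬ := fun x _ ε hε => by
    obtain ⟨ρ, hρ, hρP⟩ := Metric.eventually_nhds_iff_ball.mp (hP x)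
    refine ⟨min (ρ / 2) (min ε 1), by positivity, (min_le_right _ _).trans (min_le_left _ _),
      by positivity, (min_le_right _ _).trans (min_le_right _ _), fun y hy => hρP y ?_⟩
    exact (closedBall_subset_ball ((min_le_left _ _).trans_lt (half_lt_self hρ))) hy
  obtain ⟨ℬ', hℬ', hcount, -, hnull⟩ :=
    hV univ ℬ (fun b hb => ⟨trivial, hb.1⟩) ⟨1, fun b hb => hb.2.1⟩ hfine
  obtain ⟨t, ht, htfin, htβ⟩ := exists_finite_measure_compl_biUnion_lt hcount
    (fun b => measurableSet_closedBall) (by rwa [compl_eq_univ_sdiff]) hβ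
  exact ⟨t, htfin, fun b hb => (hℬ' (ht hb)).2.2, htβ⟩

lemma exists_finite_subset_forall_abs_sub_le {X ι : Type*} [Fintype ι] {H : Set (X → ℝ)}
    {M τ σ : ℝ} (hσ : 0 < σ) (hM : ∀ h ∈ H, ∀ x, |h x| ≤ M) (E : ι → Set X) (e : ι → X)
    (hosc : ∀ h ∈ H, ∀ i, ∀ x ∈ E i, |h x - h (e i)| ≤ τ) :
    ∃ G ⊆ H, G.Finite ∧ ∀ h ∈ H, ∃ g ∈ G, ∀ i, ∀ x ∈ E i, |h x - g x| ≤ 2 * τ + σ := by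
  let Φ : (X → ℝ) → ι → ℝ := fun h i => h (e i)
  have hbdd : Bornology.IsBounded (Φ '' H) := by
    refine (isBounded_Icc (fun _ => -M) (fun _ => M)).subset ?_
    rintro _ ⟨h, hh, rfl⟩
    exact ⟨fun i => (abs_le.mp (hM h hh (e i))).1, fun i => (abs_le.mp (hM h hh (e i))).2⟩
  obtain ⟨G, hGH, hGfin, hG⟩ := exists_subset_image_finite_and.mp
    (finite_approx_of_totallyBounded
      (hbdd.isCompact_closure.totallyBounded.subset subset_closure) σ hσ)
  refine ⟨G, hGH, hGfin, fun h hh => ?_⟩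
  obtain ⟨_, ⟨g, hg, rfl⟩, hhg⟩ := mem_iUnion₂.mp (hG (mem_image_of_mem Φ hh))
  refine ⟨g, hg, fun i x hx => ?_⟩
  have hnode : |h (e i) - g (e i)| < σ := (dist_pi_lt_iff hσ).mp (mem_ball.mp hhg) i
  have hh' := abs_le.mp (hosc h hh i x hx)
  have hg' := abs_le.mp (hosc g (hGH hg) i x hx)
  rw [abs_lt] at hnode
  rw [abs_le]
  constructor <;> linarith

def IsCompactAvgOp {X : Type*} [PseudoMetricSpace X] [MeasurableSpace X] (μ : Measure X) (r : ℝ)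
    (p q : ℝ≥0∞) : Prop :=
  ∀ F : Set (X → ℝ),
    (∀ f ∈ F, Measurable f ∧ lorentzNorm μ f p q < ⊤) →
    (∃ C : ℝ≥0∞, C < ⊤ ∧ ∀ f ∈ F, lorentzNorm μ f p q ≤ C) →
    ∀ ε : ℝ≥0∞, 0 < ε → ∃ G : Finset (X → ℝ),
      ∀ f ∈ F, ∃ g ∈ G, lorentzNorm μ (avgOp μ r f - g) p q < ε

section Sufficiency

variable {X : Type*} [PseudoMetricSpace X] [MeasurableSpace X] [OpensMeasurableSpace X]
  {μ : Measure X} {r : ℝ}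

lemma exists_pos_forall_abs_avgOp_sub_le [IsFiniteMeasure μ] {p K : ℝ} (hp : 1 < p) (hK : 0 ≤ K)
    {η : ℝ} (hη : 0 < η) (hηB : ∀ x, η ≤ μ.real (closedBall x r)) {τ : ℝ} (hτ : 0 < τ) :
    ∃ δ > 0, ∀ f : X → ℝ, Measurable f → WeakLpBound μ p K f → ∀ x y,
      μ (closedBall x r ∆ closedBall y r) ≤ ENNReal.ofReal δ →
      |avgOp μ r f x - avgOp μ r f y| ≤ τ := by
  set Θ := μ.real univ + K ^ p / (p - 1)
  have hΘ : 0 ≤ Θ := by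
    have : 0 ≤ p - 1 := by linarith
    have := Real.rpow_nonneg hK p
    positivity
  obtain ⟨δ₁, hδ₁, hδ₁τ⟩ := exists_pos_forall_setLIntegral_abs_le (μ := μ) hp hK
    (half_pos (mul_pos hη hτ))
  set δ := min δ₁ (η ^ 2 * τ / (2 * (Θ + 1)))
  refine ⟨δ, lt_min hδ₁ (by positivity), fun f hf hw x y hxy => ?_⟩
  have hsymm : ∫ z in closedBall x r ∆ closedBall y r, |f z| ∂μ ≤ η * τ / 2 := by
    rw [integral_eq_lintegral_of_nonneg_ae (ae_of_all _ fun _ => abs_nonneg _)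
      hf.abs.aestronglyMeasurable]
    exact ENNReal.toReal_le_of_le_ofReal (by positivity)
      (hδ₁τ f hf.aemeasurable hw _ (hxy.trans (ENNReal.ofReal_le_ofReal (min_le_left _ _))))
  have hmeas : μ.real (closedBall x r ∆ closedBall y r) ≤ η ^ 2 * τ / (2 * (Θ + 1)) :=
    ENNReal.toReal_le_of_le_ofReal (by positivity)
      (hxy.trans (ENNReal.ofReal_le_ofReal (min_le_right _ _)))
  calc _ ≤ (∫ z in closedBall x r ∆ closedBall y r, |f z| ∂μ) / η +
        μ.real (closedBall x r ∆ closedBall y r) * (∫ z, |f z| ∂μ) / η ^ 2 :=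
        abs_inv_mul_setIntegral_sub_le (hw.integrable hp hK hf.aemeasurable)
          measurableSet_closedBall measurableSet_closedBall hη (hηB x) (hηB y)
    _ ≤ (η * τ / 2) / η + η ^ 2 * τ / (2 * (Θ + 1)) * Θ / η ^ 2 := by
        gcongr
        exact hw.integral_abs_le hp hK hf.aemeasurable
    _ ≤ τ := by
        have hsplit : η ^ 2 * τ / (2 * (Θ + 1)) * Θ / η ^ 2 = τ / 2 * (Θ / (Θ + 1)) := by
          field_simp
        have hfrac : Θ / (Θ + 1) ≤ 1 := div_le_one_of_le₀ (by linarith) (by positivity)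
        rw [mul_div_assoc, mul_div_cancel_left₀ _ hη.ne', hsplit]
        nlinarith

lemma exists_finite_approx_avgOp [IsFiniteMeasure μ] (hV : VitaliCoveringProperty X μ)
    (hsym : ∀ x : X, Tendsto (fun y => μ (closedBall x r ∆ closedBall y r)) (𝓝 x) (𝓝 0))
    {F : Set (X → ℝ)} {M β δ : ℝ} (hβ : 0 < β) (hδ : 0 < δ)
    (hM : ∀ f ∈ F, ∀ x, |avgOp μ r f x| ≤ M)
    (hosc : ∀ f ∈ F, ∀ x y, μ (closedBall x r ∆ closedBall y r) ≤ ENNReal.ofReal δ →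
      |avgOp μ r f x - avgOp μ r f y| ≤ β / 3) :
    ∃ S : Set X, μ S ≤ ENNReal.ofReal β ∧ ∃ G ⊆ avgOp μ r '' F, G.Finite ∧
      ∀ f ∈ F, ∃ g ∈ G, ∀ x ∉ S, |avgOp μ r f x - g x| ≤ β := by
  obtain ⟨t, htfin, htδ, htβ⟩ := hV.exists_finite_cover
    (fun x => (hsym x).eventually (gt_mem_nhds (ENNReal.ofReal_pos.mpr hδ)))
    (ENNReal.ofReal_pos.mpr hβ)
  have := htfin.fintype
  obtain ⟨G, hGF, hGfin, hG⟩ := exists_finite_subset_forall_abs_sub_le (by positivity : 0 < β / 3)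
    (H := avgOp μ r '' F) (by rintro _ ⟨f, hf, rfl⟩; exact hM f hf)
    (fun b : t => closedBall b.1.1 b.1.2) (fun b => b.1.1) (by
      rintro _ ⟨f, hf, rfl⟩ ⟨b, hb⟩ x hx
      rw [abs_sub_comm]
      exact hosc f hf _ _ (htδ b hb x hx).le)
  refine ⟨_, htβ.le, G, hGF, hGfin, fun f hf => ?_⟩
  obtain ⟨g, hg, hfg⟩ := hG _ (mem_image_of_mem _ hf)
  refine ⟨g, hg, fun x hx => ?_⟩
  obtain ⟨b, hb, hxb⟩ := mem_iUnion₂.mp (notMem_compl_iff.mp hx)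
  exact (hfg ⟨b, hb⟩ x hxb).trans_eq (by ring)

theorem isCompactAvgOp_of_isBounded
    (hball : ∀ (x : X) (s : ℝ), 0 < s → 0 < μ (closedBall x s) ∧ μ (closedBall x s) < ⊤)
    (hr : 0 < r) (hdbl : ∀ s, r ≤ s → DoublingAt μ s) (hV : VitaliCoveringProperty X μ)
    (hsym : ∀ x : X, Tendsto (fun y => μ (closedBall x r ∆ closedBall y r)) (𝓝 x) (𝓝 0))
    {p q : ℝ≥0∞} (hp : 1 < p) (hp' : p ≠ ⊤) (hq : 1 ≤ q)
    (hX : Bornology.IsBounded (univ : Set X)) : IsCompactAvgOp μ r p q := by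
  rintro F hF ⟨C, hC, hFC⟩ ε hε
  have hp₀ : 0 < p.toReal := ENNReal.toReal_pos (zero_lt_one.trans hp).ne' hp'
  have hp₁ : 1 < p.toReal := by simpa using ENNReal.toReal_strict_mono hp' hp
  have := isFiniteMeasure_of_isBounded (fun x s hs => (hball x s hs).2) hX
  obtain ⟨η, hη, hηB⟩ := exists_pos_le_measureReal_closedBall hball hr hdbl hX
  set K := C.toReal / lorentzConst p q
  have hK : 0 ≤ K := div_nonneg ENNReal.toReal_nonneg (lorentzConst_pos hp₀).le
  have hw : ∀ f ∈ F, WeakLpBound μ p.toReal K f := fun f hf =>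
    weakLpBound_of_lorentzNorm_le hp₀ (zero_lt_one.trans_le hq).ne' ENNReal.toReal_nonneg
      ((hFC f hf).trans (ENNReal.ofReal_toReal hC.ne).ge)
  set M := (μ.real univ + K ^ p.toReal / (p.toReal - 1)) / η
  have hM : ∀ f ∈ F, ∀ x, |avgOp μ r f x| ≤ M := fun f hf x =>
    (abs_avgOp_le ((hw f hf).integrable hp₁ hK (hF f hf).1.aemeasurable) hη (hηB x)).trans
      (div_le_div_of_nonneg_right ((hw f hf).integral_abs_le hp₁ hK (hF f hf).1.aemeasurable) hη.le)
  obtain ⟨e, -, he, heε⟩ := ENNReal.lt_iff_exists_real_btwn.mp hε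
  obtain ⟨β, hβ, hβe⟩ :=
    exists_pos_lorentzConst_mul_lt q hp₀ (2 * M) (μ.real univ) (ENNReal.ofReal_pos.mp he)
  obtain ⟨δ, hδ, hosc⟩ :=
    exists_pos_forall_abs_avgOp_sub_le hp₁ hK hη hηB (by positivity : 0 < β / 3)
  obtain ⟨S, hS, G, hGF, hGfin, hG⟩ := exists_finite_approx_avgOp hV hsym hβ hδ hM
    fun f hf => hosc f (hF f hf).1 (hw f hf)
  refine ⟨hGfin.toFinset, fun f hf => ?_⟩
  obtain ⟨_, hg, hfg⟩ := hG f hf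
  obtain ⟨f', hf', rfl⟩ := hGF hg
  refine ⟨avgOp μ r f', hGfin.mem_toFinset.mpr hg, ?_⟩
  have hM₀ : 0 ≤ M := div_nonneg (add_nonneg measureReal_nonneg
    (div_nonneg (Real.rpow_nonneg hK _) (by linarith))) hη.le
  calc lorentzNorm μ (avgOp μ r f - avgOp μ r f') p q ≤ ENNReal.ofReal (lorentzConst p q *
        (2 * M * β ^ (1 / p.toReal) + β * μ.real univ ^ (1 / p.toReal))) :=
        lorentzNorm_sub_le_of_abs_le hp₀ hq hM₀ hβ.le (hM f hf) (hM f' hf') hS hfg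
    _ < ENNReal.ofReal e := (ENNReal.ofReal_lt_ofReal_iff (ENNReal.ofReal_pos.mp he)).mpr hβe
    _ < ε := heε

end Sufficiency

section Necessity

variable {X : Type*} [PseudoMetricSpace X] [MeasurableSpace X] [OpensMeasurableSpace X]
  {μ : Measure X} {r : ℝ}

lemma closedBall_subset_union_lt_abs_avgOp_indicator_sub
    (hball : ∀ x : X, 0 < μ (closedBall x r) ∧ μ (closedBall x r) < ⊤) {u v : X}
    (huv : 4 * r < dist u v) {c : ℝ} (hc : 0 < c) (c' : ℝ) (g : X → ℝ) :
    closedBall u r ⊆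
      {x | c / 4 < |(avgOp μ r ((closedBall u (2 * r)).indicator fun _ => c) - g) x|} ∪
        {x | c / 4 < |(avgOp μ r ((closedBall v (2 * r)).indicator fun _ => c') - g) x|} := by
  intro x hx
  have hu : avgOp μ r ((closedBall u (2 * r)).indicator fun _ => c) x = c :=
    avgOp_indicator_of_subset measurableSet_closedBall (fun y hy => mem_closedBall.mpr (by
      linarith [dist_triangle y x u, mem_closedBall.mp hx, mem_closedBall.mp hy]))
      (hball x).1.ne' (hball x).2.ne _
  have hv : avgOp μ r ((closedBall v (2 * r)).indicator fun _ => c') x = 0 :=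
    avgOp_indicator_of_disjoint measurableSet_closedBall (Set.disjoint_left.mpr fun y hy hy' => by
      linarith [dist_triangle4 u x y v, mem_closedBall'.mp hx, mem_closedBall'.mp hy,
        mem_closedBall.mp hy']) _
  by_contra hx'
  simp only [mem_union, mem_ofPred_eq, not_or, not_lt, Pi.sub_apply, hu, hv, abs_le] at hx'
  linarith

lemma lorentzNorm_avgOp_normIndicator_sub_lt_false
    (hball : ∀ (x : X) (s : ℝ), 0 < s → 0 < μ (closedBall x s) ∧ μ (closedBall x s) < ⊤)
    (hr : 0 < r) {p q : ℝ≥0∞} (hp : 0 < p.toReal) (hq : 1 ≤ q) {γ : ℝ} (hγ : 1 ≤ γ) {u v : X}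
    (hγu : μ (closedBall u (2 * r)) ≤ ENNReal.ofReal γ * μ (closedBall u r))
    (huv : 4 * r < dist u v) (g : X → ℝ)
    (hu : lorentzNorm μ (avgOp μ r (normIndicator μ p.toReal (closedBall u (2 * r))) - g) p q <
      ENNReal.ofReal (lorentzConst p q * (4 * γ)⁻¹ ^ (1 / p.toReal) / 4))
    (hv : lorentzNorm μ (avgOp μ r (normIndicator μ p.toReal (closedBall v (2 * r))) - g) p q <
      ENNReal.ofReal (lorentzConst p q * (4 * γ)⁻¹ ^ (1 / p.toReal) / 4)) : False := by
  set κ := lorentzConst p q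
  have hκ : 0 < κ := lorentzConst_pos hp
  set θ : ℝ := (4 * γ)⁻¹
  have hθ : 0 < θ := inv_pos.mpr (by linarith)
  -- `e` is tuned so that the weak-type bound at height `c / 4` is `θ μ(B(u, 2r))` (`hlevel`),
  -- and doubling turns twice this into `μ(B(u, r)) / 2`.
  set e : ℝ := κ * θ ^ (1 / p.toReal) / 4
  have hB := hball u (2 * r) (by positivity)
  have hb : 0 < μ.real (closedBall u (2 * r)) := ENNReal.toReal_pos hB.1.ne' hB.2.ne
  set c : ℝ := (μ.real (closedBall u (2 * r)) ^ (1 / p.toReal))⁻¹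
  have hc : 0 < c := inv_pos.mpr (Real.rpow_pos_of_pos hb _)
  have hlevel : ((e / κ) / (c / 4)) ^ p.toReal = θ * μ.real (closedBall u (2 * r)) := by
    have : (e / κ) / (c / 4) = (θ * μ.real (closedBall u (2 * r))) ^ (1 / p.toReal) := by
      rw [Real.mul_rpow hθ.le hb.le]
      simp only [e, c]
      field_simp
    rw [this, ← Real.rpow_mul (by positivity), one_div_mul_cancel hp.ne', Real.rpow_one]
  have hweak : ∀ {w : X → ℝ}, lorentzNorm μ w p q < ENNReal.ofReal e →
      WeakLpBound μ p.toReal (e / κ) w := fun hw =>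
    weakLpBound_of_lorentzNorm_le hp (zero_lt_one.trans_le hq).ne' (by positivity) hw.le
  have hcover := closedBall_subset_union_lt_abs_avgOp_indicator_sub (fun x => hball x r hr)
    huv hc ((μ.real (closedBall v (2 * r)) ^ (1 / p.toReal))⁻¹) g
  have hBr := hball u r hr
  have hhalf : μ (closedBall u r) ≤ ENNReal.ofReal (1 / 2) * μ (closedBall u r) :=
    calc μ (closedBall u r)
        ≤ ENNReal.ofReal (θ * μ.real (closedBall u (2 * r))) +
            ENNReal.ofReal (θ * μ.real (closedBall u (2 * r))) := by
          refine (measure_mono hcover).trans ((measure_union_le _ _).trans ?_)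
          rw [← hlevel]
          exact add_le_add (hweak hu _ (by positivity)) (hweak hv _ (by positivity))
      _ = ENNReal.ofReal (2 * θ) * μ (closedBall u (2 * r)) := by
          rw [← two_mul, ← ENNReal.ofReal_ofNat 2, ENNReal.ofReal_mul hθ.le,
            ofReal_measureReal hB.2.ne, ← mul_assoc, ← ENNReal.ofReal_mul zero_le_two]
      _ ≤ ENNReal.ofReal (2 * θ) * (ENNReal.ofReal γ * μ (closedBall u r)) := by gcongr
      _ = ENNReal.ofReal (1 / 2) * μ (closedBall u r) := by
          rw [← mul_assoc, ← ENNReal.ofReal_mul (by positivity)]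
          congr 2
          simp only [θ]
          field_simp
          ring
  have := (ENNReal.mul_le_mul_iff_left hBr.1.ne' hBr.2.ne).mp ((one_mul _).trans_le hhalf)
  norm_num at this

theorem isBounded_of_isCompactAvgOp
    (hball : ∀ (x : X) (s : ℝ), 0 < s → 0 < μ (closedBall x s) ∧ μ (closedBall x s) < ⊤)
    (hr : 0 < r) (hdbl : DoublingAt μ r) {p q : ℝ≥0∞} (hp : 0 < p.toReal) (hq : 1 ≤ q)
    (h : IsCompactAvgOp μ r p q) : Bornology.IsBounded (univ : Set X) := by
  by_contra hX
  obtain ⟨γ, hγ, hγB⟩ := hdbl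
  obtain ⟨u, hu⟩ := exists_seq_lt_dist_of_not_isBounded hX (4 * r)
  set f : ℕ → X → ℝ := fun n => normIndicator μ p.toReal (closedBall (u n) (2 * r))
  have hf : ∀ n, lorentzNorm μ (f n) p q ≤ ENNReal.ofReal (lorentzConst p q) := fun n =>
    have hB := hball (u n) (2 * r) (by positivity)
    lorentzNorm_normIndicator_le hp hq hB.1.ne' hB.2.ne
  have he : 0 < lorentzConst p q * (4 * γ)⁻¹ ^ (1 / p.toReal) / 4 := by
    have := lorentzConst_pos (q := q) hp
    have : 0 < (4 * γ)⁻¹ := inv_pos.mpr (by linarith)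
    positivity
  obtain ⟨G, hG⟩ := h (range f)
    (by rintro _ ⟨n, rfl⟩; exact ⟨measurable_const.indicator measurableSet_closedBall,
      (hf n).trans_lt ENNReal.ofReal_lt_top⟩)
    ⟨_, ENNReal.ofReal_lt_top, by rintro _ ⟨n, rfl⟩; exact hf n⟩ _ (ENNReal.ofReal_pos.mpr he)
  choose g hgG hg using fun n => hG (f n) (mem_range_self n)
  obtain ⟨n, m, hnm, hgnm⟩ := Finite.exists_ne_map_eq_of_infinite fun n => (⟨g n, hgG n⟩ : G)
  have hgm : g m = g n := congrArg Subtype.val hgnm.symm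
  exact lorentzNorm_avgOp_normIndicator_sub_lt_false hball hr hp hq hγ (hγB (u n)) (hu hnm) (g n)
    (hg n) (hgm ▸ hg m)

end Necessity

/-- Let `X` be `s`-doubling with the Vitali covering property for all
`s ≥ r`, with `μ(B(x,r) △ B(y,r)) → 0` as `y → x` for each `x`, and let `p ∈ (1,∞)`,
`q ∈ [1,∞]`. Then the averaging operator `A_r : L^{p,q}(X) → L^{p,q}(X)` is compact
(the image of every `‖·‖_{p,q}`-bounded subset of `L^{p,q}(X)` is totally bounded in
`‖·‖_{p,q}`) if and only if `X` is bounded. -/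
theorem statement_2 {X : Type*} [MetricSpace X] [MeasurableSpace X] [BorelSpace X]
    (μ : Measure X)
    (hball : ∀ (x : X) (s : ℝ), 0 < s → 0 < μ (closedBall x s) ∧ μ (closedBall x s) < ⊤)
    (r : ℝ) (hr : 0 < r)
    (hdbl : ∀ s : ℝ, r ≤ s → DoublingAt μ s)
    (hvitali : VitaliCoveringProperty X μ)
    (hsym : ∀ x : X,
      Tendsto (fun y => μ (symmDiff (closedBall x r) (closedBall y r))) (nhds x) (nhds 0))
    (p q : ENNReal) (hp : 1 < p) (hp' : p ≠ ⊤) (hq : 1 ≤ q) :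
    (∀ F : Set (X → ℝ),
      (∀ f ∈ F, Measurable f ∧ lorentzNorm μ f p q < ⊤) →
      (∃ C : ENNReal, C < ⊤ ∧ ∀ f ∈ F, lorentzNorm μ f p q ≤ C) →
      ∀ ε : ENNReal, 0 < ε → ∃ G : Finset (X → ℝ),
        ∀ f ∈ F, ∃ g ∈ G, lorentzNorm μ (avgOp μ r f - g) p q < ε) ↔
    Bornology.IsBounded (Set.univ : Set X) :=
  ⟨isBounded_of_isCompactAvgOp hball hr (hdbl r le_rfl)
      (ENNReal.toReal_pos (zero_lt_one.trans hp).ne' hp') hq,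
    isCompactAvgOp_of_isBounded hball hr hdbl hvitali hsym hp hp' hq⟩
end

section
/- Let (X,d,μ) be a Borel metric measure space in which every closed ball has positive finite measure, fix r > 0, and suppose X is s-doubling and has the Vitali covering property for every s ≥ r. Then there exists a constant c ≥ 2 such that for every measurable function f on X that is integrable on every measurable set of finite measure and for every t > 0, μ_{A_r f}(ct) ≤ (1/t) ∫_{{x ∈ X : |f(x)| > t}} |f(x)| dμ(x), where μ_g(t) = μ({x : |g(x)| > t}) denotes the distribution function. -/
open MeasureTheory Metric Filter Set

/-! At a point where `|A_r f| > (γ + 1) t`, discarding the values `|f| ≤ t` from the ball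
`B(x, r)` costs at most `t μ(B(x, r))`, so `|f| 1_{|f| > t}` still has mass `≥ γ t μ(B(x, r))`
there. A maximal disjoint family of such balls is countable because that mass is finite, the
doubled balls cover the level set, and doubling at scale `r` gives
`μ_{A_r f}((γ + 1) t) ≤ γ (γ t)⁻¹ ∫_{|f| > t} |f|`. -/

open scoped ENNReal

section

variable {X : Type*} [MeasurableSpace X]

theorem avgOp_eq_setAverage [PseudoMetricSpace X] (μ : Measure X) (r : ℝ) (f : X → ℝ) (x : X) :
    avgOp μ r f x = ⨍ y in closedBall x r, f y ∂μ := by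
  rw [avgOp, setAverage_eq, smul_eq_mul, measureReal_def]

theorem ofReal_abs_setAverage_mul_measure_le_lintegral (μ : Measure X) (f : X → ℝ) (s : Set X) :
    ENNReal.ofReal |⨍ y in s, f y ∂μ| * μ s ≤ ∫⁻ y in s, ENNReal.ofReal |f y| ∂μ := by
  rcases eq_or_ne (μ s) ∞ with hs | hs
  · -- the average over a set of infinite measure is the junk value `0`
    simp [setAverage_eq, measureReal_def, hs]
  calc ENNReal.ofReal |⨍ y in s, f y ∂μ| * μ s
      = ENNReal.ofReal |μ.real s • ⨍ y in s, f y ∂μ| := by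
        rw [smul_eq_mul, abs_mul, abs_of_nonneg measureReal_nonneg,
          ENNReal.ofReal_mul measureReal_nonneg, measureReal_def, ENNReal.ofReal_toReal hs,
          mul_comm]
    _ = ‖∫ y in s, f y ∂μ‖ₑ := by rw [measure_smul_setAverage f hs, Real.enorm_eq_ofReal_abs]
    _ ≤ ∫⁻ y in s, ‖f y‖ₑ ∂μ := enorm_integral_le_lintegral_enorm f
    _ = ∫⁻ y in s, ENNReal.ofReal |f y| ∂μ := by simp only [Real.enorm_eq_ofReal_abs]

theorem setLIntegral_ofReal_abs_le_of_gt {μ : Measure X} {f : X → ℝ} (hf : Measurable f)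
    (s : Set X) (t : ℝ) :
    ∫⁻ y in s, ENNReal.ofReal |f y| ∂μ ≤
      ∫⁻ y in s ∩ {y | t < |f y|}, ENNReal.ofReal |f y| ∂μ + ENNReal.ofReal t * μ s := by
  have hS : MeasurableSet {y | t < |f y|} := measurableSet_lt measurable_const hf.abs
  calc ∫⁻ y in s, ENNReal.ofReal |f y| ∂μ
      ≤ ∫⁻ y in s, ({y | t < |f y|}.indicator (fun y => ENNReal.ofReal |f y|) y
          + ENNReal.ofReal t) ∂μ := by
        refine lintegral_mono fun y => ?_
        by_cases hy : t < |f y|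
        · simp [hy]
        · simpa [hy] using ENNReal.ofReal_le_ofReal (not_lt.1 hy)
    _ = _ := by
        rw [lintegral_add_right _ measurable_const, lintegral_indicator hS,
          Measure.restrict_restrict hS, inter_comm, setLIntegral_const]

theorem mul_measure_le_setLIntegral_of_lt_abs_setAverage {μ : Measure X} {f : X → ℝ}
    (hf : Measurable f) {s : Set X} (hs : μ s ≠ ∞) {a t : ℝ} (ha : 0 ≤ a) (ht : 0 ≤ t)
    (havg : a + t < |⨍ y in s, f y ∂μ|) :
    ENNReal.ofReal a * μ s ≤ ∫⁻ y in s ∩ {y | t < |f y|}, ENNReal.ofReal |f y| ∂μ := by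
  refine (ENNReal.add_le_add_iff_right (a := ENNReal.ofReal t * μ s)
    (ENNReal.mul_ne_top ENNReal.ofReal_ne_top hs)).1 ?_
  calc ENNReal.ofReal a * μ s + ENNReal.ofReal t * μ s
      = ENNReal.ofReal (a + t) * μ s := by rw [ENNReal.ofReal_add ha ht, add_mul]
    _ ≤ ENNReal.ofReal |⨍ y in s, f y ∂μ| * μ s := by gcongr
    _ ≤ ∫⁻ y in s, ENNReal.ofReal |f y| ∂μ :=
        ofReal_abs_setAverage_mul_measure_le_lintegral μ f s
    _ ≤ _ := setLIntegral_ofReal_abs_le_of_gt hf s t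

end

theorem mul_measure_le_of_forall_mul_measure_closedBall_le
    {X : Type*} [PseudoMetricSpace X] [MeasurableSpace X] [OpensMeasurableSpace X]
    {μ ν : Measure X} [SFinite ν] {E : Set X} {r : ℝ} (hr : 0 ≤ r) {C c : ℝ≥0∞} (hc : c ≠ 0)
    (hdbl : ∀ x, μ (closedBall x (2 * r)) ≤ C * μ (closedBall x r))
    (hpos : ∀ x ∈ E, μ (closedBall x r) ≠ 0)
    (hmass : ∀ x ∈ E, c * μ (closedBall x r) ≤ ν (closedBall x r)) :
    c * μ E ≤ C * ν univ := by
  obtain ⟨P, hPE, hdisj, hcov⟩ := Vitali.exists_disjoint_subfamily_covering_enlargement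
    (fun x => closedBall x r) E (fun _ => r) 2 one_lt_two (fun _ _ => hr) r (fun _ _ => le_rfl)
    (fun _ _ => nonempty_closedBall.2 hr)
  have hEcov : E ⊆ ⋃ p ∈ P, closedBall p (2 * r) := by
    intro x hx
    obtain ⟨p, hp, ⟨y, hxy, hpy⟩, -⟩ := hcov x hx
    refine mem_biUnion hp ?_
    calc dist x p ≤ dist x y + dist y p := dist_triangle x y p
      _ ≤ r + r := add_le_add (by rwa [mem_closedBall, dist_comm] at hxy) hpy
      _ = 2 * r := (two_mul r).symm
  have hPc : P.Countable := by
    have hcnt := Measure.countable_meas_pos_of_disjoint_iUnion₀ (μ := ν)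
      (As := fun p : P => closedBall (p : X) r)
      (fun _ => measurableSet_closedBall.nullMeasurableSet)
      (fun p q hpq => (hdisj p.2 q.2 (Subtype.coe_ne_coe.2 hpq)).aedisjoint)
    have hall : {p : P | 0 < ν (closedBall (p : X) r)} = univ :=
      eq_univ_of_forall fun p => (ENNReal.mul_pos hc (hpos p (hPE p.2))).trans_le
        (hmass p (hPE p.2))
    rw [hall, countable_univ_iff] at hcnt
    exact countable_coe_iff.1 hcnt
  calc c * μ E
      ≤ c * ∑' p : P, μ (closedBall (p : X) (2 * r)) :=
        mul_le_mul_right ((measure_mono hEcov).trans (measure_biUnion_le μ hPc _)) c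
    _ ≤ c * ∑' p : P, C * μ (closedBall (p : X) r) := by gcongr with p; exact hdbl p
    _ = C * ∑' p : P, c * μ (closedBall (p : X) r) := by
        rw [ENNReal.tsum_mul_left, ENNReal.tsum_mul_left, mul_left_comm]
    _ ≤ C * ∑' p : P, ν (closedBall (p : X) r) := by gcongr with p; exact hmass p (hPE p.2)
    _ = C * ν (⋃ p ∈ P, closedBall p r) := by
        rw [measure_biUnion hPc hdisj fun _ _ => measurableSet_closedBall]
    _ ≤ C * ν univ := by gcongr; exact subset_univ _

theorem statement_7_general {X : Type*} [MetricSpace X] [MeasurableSpace X] [BorelSpace X]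
    (μ : Measure X)
    (hball : ∀ (x : X) (s : ℝ), 0 < s → 0 < μ (closedBall x s) ∧ μ (closedBall x s) < ⊤)
    (r : ℝ) (hr : 0 < r)
    (hdbl : ∀ s : ℝ, r ≤ s → DoublingAt μ s) :
    ∃ c : ℝ, 2 ≤ c ∧ ∀ f : X → ℝ, Measurable f →
      (∀ A : Set X, MeasurableSet A → μ A < ⊤ → IntegrableOn f A μ) →
      ∀ t : ℝ, 0 < t →
        μ {x : X | c * t < |avgOp μ r f x|} ≤
          (ENNReal.ofReal t)⁻¹ * ∫⁻ x in {x : X | t < |f x|}, ENNReal.ofReal |f x| ∂μ := by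
  obtain ⟨γ, hγ1, hγ⟩ := hdbl r le_rfl
  refine ⟨γ + 1, by linarith, fun f hf _ t ht => ?_⟩
  set S := {x : X | t < |f x|}
  set ν := (μ.restrict S).withDensity fun x => ENNReal.ofReal |f x|
  have hνuniv : ν univ = ∫⁻ x in S, ENNReal.ofReal |f x| ∂μ := by
    rw [withDensity_apply _ MeasurableSet.univ, Measure.restrict_univ]
  rcases eq_or_ne (ν univ) ∞ with hI | hI
  · rw [← hνuniv, hI, ENNReal.mul_top (ENNReal.inv_ne_zero.2 ENNReal.ofReal_ne_top)]
    exact le_top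
  have : IsFiniteMeasure ν := ⟨hI.lt_top⟩
  have hmass : ∀ x ∈ {x | (γ + 1) * t < |avgOp μ r f x|},
      ENNReal.ofReal (γ * t) * μ (closedBall x r) ≤ ν (closedBall x r) := by
    intro x hx
    rw [withDensity_apply _ measurableSet_closedBall,
      Measure.restrict_restrict measurableSet_closedBall]
    refine mul_measure_le_setLIntegral_of_lt_abs_setAverage hf (hball x r hr).2.ne
      (by positivity) ht.le ?_
    rw [← avgOp_eq_setAverage]
    linarith [hx.out]
  have key := mul_measure_le_of_forall_mul_measure_closedBall_le hr.le
    (ENNReal.ofReal_pos.2 (by positivity)).ne' hγ (fun x _ => (hball x r hr).1.ne') hmass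
  have hγ0 : ENNReal.ofReal γ ≠ 0 := (ENNReal.ofReal_pos.2 (by linarith)).ne'
  rw [ENNReal.ofReal_mul (by linarith), mul_assoc,
    ENNReal.mul_le_mul_iff_right hγ0 ENNReal.ofReal_ne_top] at key
  rw [← hνuniv, ← ENNReal.mul_le_iff_le_inv (ENNReal.ofReal_pos.2 ht).ne' ENNReal.ofReal_ne_top]
  exact key

/-- If `X` is `s`-doubling and has the Vitali covering property for all
`s ≥ r`, there is `c ≥ 2` such that for every measurable `f` that is integrable on every
measurable set of finite measure and every `t > 0`,
`μ_{A_r f}(ct) ≤ (1/t) ∫_{{|f| > t}} |f| dμ`. -/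
theorem statement_7 {X : Type*} [MetricSpace X] [MeasurableSpace X] [BorelSpace X]
    (μ : Measure X)
    (hball : ∀ (x : X) (s : ℝ), 0 < s → 0 < μ (closedBall x s) ∧ μ (closedBall x s) < ⊤)
    (r : ℝ) (hr : 0 < r)
    (hdbl : ∀ s : ℝ, r ≤ s → DoublingAt μ s)
    (hvitali : VitaliCoveringProperty X μ) :
    ∃ c : ℝ, 2 ≤ c ∧ ∀ f : X → ℝ, Measurable f →
      (∀ A : Set X, MeasurableSet A → μ A < ⊤ → IntegrableOn f A μ) →
      ∀ t : ℝ, 0 < t →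
        μ {x : X | c * t < |avgOp μ r f x|} ≤
          (ENNReal.ofReal t)⁻¹ * ∫⁻ x in {x : X | t < |f x|}, ENNReal.ofReal |f x| ∂μ :=
  statement_7_general μ hball r hr hdbl
end

section
/- Let (X,d,μ) be a Borel metric measure space in which every closed ball has positive finite measure, fix r > 0, and suppose X is s-doubling and has the Vitali covering property for every s ≥ r. Let 1 < p ≤ ∞ and 1 ≤ q ≤ ∞. Then there exists a constant c ≥ 2 such that for every f ∈ L^{p,q}(X), ‖A_r f‖_{p,q} ≤ (cp/(p−1)) ‖f‖_{p,q}, and likewise ‖A_r f‖_{(p,q)} ≤ (cp/(p−1)) ‖f‖_{(p,q)}; in particular A_r maps L^{p,q}(X) into L^{p,q}(X). -/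
open MeasureTheory Metric Filter Set

/-!
Split `f` at height `f*(s)`. The part below contributes at most `f*(s)` to `A_r f`; the part
above has `L¹` norm at most `∫_0^s f* = s f**(s)`, and by a maximal `2r`-separated set of centres
and `r`-doubling its ball averages exceed `γ f**(s)` only on a set of measure at most `s`. Hence
`(A_r f)*(s) ≤ (1 + γ) f**(s)`, and both Lorentz norms follow from Hardy's inequality
`‖h**‖ ≤ C_p ‖h‖` for decreasing `h`: cutting `(0, 1]` into dyadic pieces bounds `h**` by
`Σ_k 2^{-(k+1)} h(2^{-(k+1)} ·)`, a dilation by `λ` scales the Lorentz functional by `λ^{-1/p}`,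
and `C_p = Σ_k 2^{-(k+1)(1 - 1/p)}` is finite because `p > 1`.
-/

open scoped ENNReal

namespace Lorentz

lemma lintegral_rpow_tsum_le {α : Type*} [MeasurableSpace α] (ν : Measure α) {Q : ℝ}
    (hQ : 1 ≤ Q) {v : ℕ → α → ℝ≥0∞} (hv : ∀ k, AEMeasurable (v k) ν) :
    (∫⁻ a, (∑' k, v k a) ^ Q ∂ν) ^ (1 / Q) ≤ ∑' k, (∫⁻ a, v k a ^ Q ∂ν) ^ (1 / Q) := by
  have hQ0 : 0 < Q := by linarith
  have hrpow {e : ℝ} (he : 0 < e) (g : ℕ → ℝ≥0∞) : (⨆ n, g n) ^ e = ⨆ n, g n ^ e :=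
    (ENNReal.orderIsoRpow e he).map_iSup g
  have hpartial (n : ℕ) : (∫⁻ a, (∑ k ∈ Finset.range n, v k a) ^ Q ∂ν) ^ (1 / Q)
      ≤ ∑ k ∈ Finset.range n, (∫⁻ a, v k a ^ Q ∂ν) ^ (1 / Q) := by
    simpa [eLpNorm'_eq_lintegral_enorm] using
      eLpNorm'_sum_le (μ := ν) (s := Finset.range n) (fun k _ => (hv k).aestronglyMeasurable) hQ
  calc (∫⁻ a, (∑' k, v k a) ^ Q ∂ν) ^ (1 / Q)
      = (∫⁻ a, ⨆ n, (∑ k ∈ Finset.range n, v k a) ^ Q ∂ν) ^ (1 / Q) := by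
        simp_rw [ENNReal.tsum_eq_iSup_nat, hrpow hQ0]
    _ = (⨆ n, ∫⁻ a, (∑ k ∈ Finset.range n, v k a) ^ Q ∂ν) ^ (1 / Q) := by
        rw [lintegral_iSup' (fun n => (Finset.aemeasurable_fun_sum _ fun k _ => hv k).pow_const Q)
          (ae_of_all _ fun a m n hmn => ENNReal.rpow_le_rpow
            (Finset.sum_le_sum_of_subset (Finset.range_subset_range.2 hmn)) hQ0.le)]
    _ = ⨆ n, (∫⁻ a, (∑ k ∈ Finset.range n, v k a) ^ Q ∂ν) ^ (1 / Q) := hrpow (by positivity) _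
    _ ≤ ⨆ n, ∑ k ∈ Finset.range n, (∫⁻ a, v k a ^ Q ∂ν) ^ (1 / Q) := iSup_mono hpartial
    _ = ∑' k, (∫⁻ a, v k a ^ Q ∂ν) ^ (1 / Q) := ENNReal.tsum_eq_iSup_nat.symm

lemma one_le_ite_div_tsub {p : ℝ≥0∞} (hp : p ≠ 0) : 1 ≤ if p = ⊤ then 1 else p / (p - 1) := by
  split_ifs with hptop
  · exact le_rfl
  · refine (ENNReal.le_div_iff_mul_le (.inr hp) (.inl (ENNReal.sub_ne_top hptop))).2 ?_
    rw [one_mul]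
    exact tsub_le_self

section RealLine

lemma setLIntegral_comp_const_mul (φ : ℝ → ℝ≥0∞) {a : ℝ} (ha : 0 < a) (s : Set ℝ) :
    ∫⁻ u in (a * ·) ⁻¹' s, φ (a * u) = ENNReal.ofReal a⁻¹ * ∫⁻ v in s, φ v := by
  have hemb : MeasurableEmbedding (a * ·) := (Homeomorph.mulLeft₀ a ha.ne').measurableEmbedding
  rw [← hemb.lintegral_map, ← hemb.restrict_map, Real.map_volume_mul_left ha.ne',
    Measure.restrict_smul, lintegral_smul_measure, abs_of_pos (inv_pos.mpr ha), smul_eq_mul]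

lemma lintegral_Ioi_comp_const_mul (φ : ℝ → ℝ≥0∞) {a : ℝ} (ha : 0 < a) :
    ∫⁻ t in Ioi 0, φ (a * t) = ENNReal.ofReal a⁻¹ * ∫⁻ u in Ioi 0, φ u := by
  simpa [Set.preimage_const_mul_Ioi₀ _ ha] using setLIntegral_comp_const_mul φ ha (Ioi 0)

lemma volume_setOf_ofReal_le_inter_Ioi_le (a : ℝ≥0∞) :
    volume ({u : ℝ | ENNReal.ofReal u ≤ a} ∩ Ioi 0) ≤ a := by
  rcases eq_or_ne a ⊤ with rfl | ha
  · exact le_top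
  calc volume ({u : ℝ | ENNReal.ofReal u ≤ a} ∩ Ioi 0) ≤ volume (Ioc 0 a.toReal) :=
        measure_mono fun u hu => ⟨hu.2, (ENNReal.ofReal_le_iff_le_toReal ha).1 hu.1⟩
    _ = a := by rw [Real.volume_Ioc, sub_zero, ENNReal.ofReal_toReal ha]

/-- The inequality half of the layer-cake formula for `ℝ≥0∞`-valued functions. -/
lemma lintegral_Ioi_measure_le_le (ν : Measure ℝ) [SFinite ν] {φ : ℝ → ℝ≥0∞}
    (hφ : Measurable φ) :
    ∫⁻ u in Ioi 0, ν {w | ENNReal.ofReal u ≤ φ w} ≤ ∫⁻ w, φ w ∂ν := by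
  set A : Set (ℝ × ℝ) := {z | ENNReal.ofReal z.1 ≤ φ z.2}
  have hA : MeasurableSet A :=
    measurableSet_le (ENNReal.measurable_ofReal.comp measurable_fst) (hφ.comp measurable_snd)
  calc ∫⁻ u in Ioi 0, ν {w | ENNReal.ofReal u ≤ φ w}
      = ((volume.restrict (Ioi 0)).prod ν) A := (Measure.prod_apply hA).symm
    _ = ∫⁻ w, volume.restrict (Ioi 0) {u | ENNReal.ofReal u ≤ φ w} ∂ν :=
        Measure.prod_apply_symm hA
    _ ≤ ∫⁻ w, φ w ∂ν := lintegral_mono fun w => by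
        rw [Measure.restrict_apply' measurableSet_Ioi]
        exact volume_setOf_ofReal_le_inter_Ioi_le (φ w)

end RealLine

section HardyAvg

noncomputable def hardyAvg (h : ℝ → ℝ≥0∞) (t : ℝ) : ℝ≥0∞ :=
  (ENNReal.ofReal t)⁻¹ * ∫⁻ s in Ioc 0 t, h s

variable {h h₁ h₂ : ℝ → ℝ≥0∞} {t : ℝ}

lemma hardyAvg_eq_setLIntegral (h : ℝ → ℝ≥0∞) (ht : 0 < t) :
    hardyAvg h t = ∫⁻ u in Ioc 0 1, h (t * u) := by
  rw [hardyAvg, ← ENNReal.ofReal_inv_of_pos ht, ← setLIntegral_comp_const_mul h ht,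
    Set.preimage_const_mul_Ioc₀ _ _ ht, zero_div, div_self ht.ne']

lemma le_hardyAvg (hh : AntitoneOn h (Ioi 0)) (ht : 0 < t) : h t ≤ hardyAvg h t := by
  rw [hardyAvg_eq_setLIntegral h ht]
  calc h t = ∫⁻ _ in Ioc (0 : ℝ) 1, h t := by simp
    _ ≤ ∫⁻ u in Ioc 0 1, h (t * u) := setLIntegral_mono' measurableSet_Ioc fun u hu =>
        hh (mul_pos ht hu.1) ht (mul_le_of_le_one_right ht.le hu.2)

lemma hardyAvg_antitoneOn (hh : AntitoneOn h (Ioi 0)) : AntitoneOn (hardyAvg h) (Ioi 0) := by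
  intro a ha b hb hab
  rw [hardyAvg_eq_setLIntegral h ha, hardyAvg_eq_setLIntegral h hb]
  exact setLIntegral_mono' measurableSet_Ioc fun u hu =>
    hh (mul_pos (mem_Ioi.1 ha) hu.1) (mul_pos (mem_Ioi.1 hb) hu.1)
      (mul_le_mul_of_nonneg_right hab hu.1.le)

lemma hardyAvg_mono (hle : ∀ s, 0 < s → h₁ s ≤ h₂ s) (t : ℝ) : hardyAvg h₁ t ≤ hardyAvg h₂ t :=
  mul_le_mul_right (setLIntegral_mono' measurableSet_Ioc fun s hs => hle s hs.1) _

lemma hardyAvg_const_mul {c : ℝ≥0∞} (hc : c ≠ ⊤) (h : ℝ → ℝ≥0∞) (t : ℝ) :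
    hardyAvg (fun s => c * h s) t = c * hardyAvg h t := by
  rw [hardyAvg, hardyAvg, lintegral_const_mul' _ _ hc, mul_left_comm]

lemma measurable_hardyAvg (h : ℝ → ℝ≥0∞) : Measurable (hardyAvg h) :=
  ENNReal.measurable_ofReal.inv.mul <|
    Monotone.measurable fun _ _ hab => lintegral_mono_set (Ioc_subset_Ioc_right hab)

lemma hardyAvg_le_tsum (hh : AntitoneOn h (Ioi 0)) (ht : 0 < t) :
    hardyAvg h t ≤ ∑' k : ℕ, ENNReal.ofReal (2⁻¹ ^ (k + 1)) * h (2⁻¹ ^ (k + 1) * t) := by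
  set I : ℕ → Set ℝ := fun k => Ioc (2⁻¹ ^ (k + 1)) (2⁻¹ ^ k)
  have hcover : Ioc (0 : ℝ) 1 ⊆ ⋃ k, I k := fun u hu =>
    mem_iUnion.2 (exists_nat_pow_near_of_lt_one hu.1 hu.2 (by norm_num) (by norm_num))
  have hvol (k : ℕ) : volume (I k) = ENNReal.ofReal (2⁻¹ ^ (k + 1)) := by
    rw [Real.volume_Ioc]
    congr 1
    ring
  rw [hardyAvg_eq_setLIntegral h ht]
  calc ∫⁻ u in Ioc 0 1, h (t * u) ≤ ∫⁻ u in ⋃ k, I k, h (t * u) := lintegral_mono_set hcover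
    _ ≤ ∑' k, ∫⁻ u in I k, h (t * u) := lintegral_iUnion_le _ _
    _ ≤ ∑' k, ∫⁻ _ in I k, h (2⁻¹ ^ (k + 1) * t) :=
        ENNReal.tsum_le_tsum fun k => setLIntegral_mono' measurableSet_Ioc fun u hu => by
          have hu0 : 0 < u := lt_trans (by positivity) hu.1
          rw [mul_comm t u]
          exact hh (mem_Ioi.2 (by positivity)) (mul_pos hu0 ht)
            (mul_le_mul_of_nonneg_right hu.1.le ht.le)
    _ = ∑' k : ℕ, ENNReal.ofReal (2⁻¹ ^ (k + 1)) * h (2⁻¹ ^ (k + 1) * t) := by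
        simp_rw [setLIntegral_const, hvol, mul_comm]

end HardyAvg

section LorentzFun

/-- The Lorentz functional of `lorentzNorm` and `lorentzNorm'`, applied to an arbitrary
`h : ℝ → ℝ≥0∞` in place of `f*` or `f**`. -/
noncomputable def lorentzFun (p q : ℝ≥0∞) (h : ℝ → ℝ≥0∞) : ℝ≥0∞ :=
  if q = ⊤ then ⨆ t ∈ Set.Ioi (0 : ℝ), ENNReal.ofReal (t ^ (1 / p.toReal)) * h t
  else (∫⁻ t in Set.Ioi (0 : ℝ),
    ENNReal.ofReal (t ^ (q.toReal / p.toReal - 1)) * h t ^ q.toReal) ^ (1 / q.toReal)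

lemma lorentzNorm_eq_lorentzFun {X : Type*} [MeasurableSpace X] (μ : Measure X) (f : X → ℝ)
    (p q : ℝ≥0∞) : lorentzNorm μ f p q = lorentzFun p q (rearr μ f) := rfl

lemma lorentzNorm'_eq_lorentzFun {X : Type*} [MeasurableSpace X] (μ : Measure X) (f : X → ℝ)
    (p q : ℝ≥0∞) : lorentzNorm' μ f p q = lorentzFun p q (hardyAvg (rearr μ f)) := rfl

variable {p q : ℝ≥0∞} {h h₁ h₂ : ℝ → ℝ≥0∞}

lemma lorentzFun_mono (hle : ∀ t, 0 < t → h₁ t ≤ h₂ t) :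
    lorentzFun p q h₁ ≤ lorentzFun p q h₂ := by
  unfold lorentzFun
  split_ifs
  · exact iSup₂_mono fun t ht => mul_le_mul_right (hle t ht) _
  · refine ENNReal.rpow_le_rpow (setLIntegral_mono' measurableSet_Ioi fun t ht => ?_)
      (by positivity)
    exact mul_le_mul_right (ENNReal.rpow_le_rpow (hle t ht) ENNReal.toReal_nonneg) _

lemma lorentzFun_const_mul (hq : q ≠ 0) {c : ℝ≥0∞} (hc : c ≠ ⊤) (h : ℝ → ℝ≥0∞) :
    lorentzFun p q (fun t => c * h t) = c * lorentzFun p q h := by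
  unfold lorentzFun
  split_ifs with hqtop
  · simp_rw [ENNReal.mul_iSup, mul_left_comm c]
  · have hQ : 0 < q.toReal := ENNReal.toReal_pos hq hqtop
    simp_rw [ENNReal.mul_rpow_of_nonneg _ _ hQ.le, mul_left_comm _ (c ^ q.toReal)]
    rw [lintegral_const_mul' _ _ (ENNReal.rpow_ne_top_of_nonneg hQ.le hc),
      ENNReal.mul_rpow_of_nonneg _ _ (by positivity), ← ENNReal.rpow_mul,
      mul_one_div_cancel hQ.ne', ENNReal.rpow_one]

lemma lorentzFun_comp_const_mul_le (hq : q ≠ 0) {a : ℝ} (ha : 0 < a) (h : ℝ → ℝ≥0∞) :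
    lorentzFun p q (fun t => h (a * t))
      ≤ ENNReal.ofReal (a ^ (-(1 / p.toReal))) * lorentzFun p q h := by
  set P := p.toReal
  unfold lorentzFun
  split_ifs with hqtop
  · refine iSup₂_le fun t ht => ?_
    have hweight : ENNReal.ofReal (t ^ (1 / P))
        = ENNReal.ofReal (a ^ (-(1 / P))) * ENNReal.ofReal ((a * t) ^ (1 / P)) := by
      rw [← ENNReal.ofReal_mul (by positivity), Real.mul_rpow ha.le (mem_Ioi.1 ht).le, ← mul_assoc,
        ← Real.rpow_add ha, neg_add_cancel, Real.rpow_zero, one_mul]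
    rw [hweight, mul_assoc]
    exact mul_le_mul_right (le_iSup₂ (f := fun s (_ : s ∈ Ioi (0 : ℝ)) =>
      ENNReal.ofReal (s ^ (1 / P)) * h s) (a * t) (mul_pos ha ht)) _
  · set Q := q.toReal
    have hQ : 0 < Q := ENNReal.toReal_pos hq hqtop
    set α := Q / P - 1
    have hweight : ∀ t ∈ Ioi (0 : ℝ), ENNReal.ofReal (t ^ α) * h (a * t) ^ Q
        = ENNReal.ofReal (a ^ (-α)) * (ENNReal.ofReal ((a * t) ^ α) * h (a * t) ^ Q) :=
      fun t ht => by
        rw [← mul_assoc, ← ENNReal.ofReal_mul (by positivity),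
          Real.mul_rpow ha.le (mem_Ioi.1 ht).le,
          ← mul_assoc, ← Real.rpow_add ha, neg_add_cancel, Real.rpow_zero, one_mul]
    have hexp : (-α + -1) * (1 / Q) = -(1 / P) := by
      rcases eq_or_ne P 0 with hP | hP
      · simp [α, hP]
      · simp only [α]
        field_simp
        ring
    -- substituting `u = a t` contributes `a⁻¹`, and `(a^(-α) * a⁻¹) ^ (1 / Q) = a^(-1/P)`
    rw [setLIntegral_congr_fun measurableSet_Ioi hweight,
      lintegral_const_mul' _ _ ENNReal.ofReal_ne_top,
      lintegral_Ioi_comp_const_mul (fun u => ENNReal.ofReal (u ^ α) * h u ^ Q) ha, ← mul_assoc,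
      ← ENNReal.ofReal_mul (by positivity), ← Real.rpow_neg_one a, ← Real.rpow_add ha,
      ENNReal.mul_rpow_of_nonneg _ _ (by positivity), ← ENNReal.ofReal_rpow_of_pos ha,
      ← ENNReal.rpow_mul, hexp, ENNReal.ofReal_rpow_of_pos ha]

lemma lorentzFun_tsum_le (hq : 1 ≤ q) {u : ℕ → ℝ → ℝ≥0∞} (hu : ∀ k, Measurable (u k)) :
    lorentzFun p q (fun t => ∑' k, u k t) ≤ ∑' k, lorentzFun p q (u k) := by
  unfold lorentzFun
  split_ifs with hqtop
  · refine iSup₂_le fun t ht => ?_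
    rw [← ENNReal.tsum_mul_left]
    exact ENNReal.tsum_le_tsum fun k => le_iSup₂ (f := fun s (_ : s ∈ Ioi (0 : ℝ)) =>
      ENNReal.ofReal (s ^ (1 / p.toReal)) * u k s) t ht
  · set Q := q.toReal
    have hQ : 1 ≤ Q := by simpa using ENNReal.toReal_mono hqtop hq
    set w : ℝ → ℝ≥0∞ := fun t => ENNReal.ofReal (t ^ (Q / p.toReal - 1))
    have hw : Measurable w := (measurable_id.pow_const _).ennreal_ofReal
    set ν := (volume.restrict (Ioi 0)).withDensity w
    have hν {g : ℝ → ℝ≥0∞} (hg : Measurable g) :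
        ∫⁻ t in Ioi 0, w t * g t ^ Q = ∫⁻ t, g t ^ Q ∂ν :=
      (lintegral_withDensity_eq_lintegral_mul _ hw (hg.pow_const Q)).symm
    rw [hν (Measurable.tsum hu)]
    calc (∫⁻ t, (∑' k, u k t) ^ Q ∂ν) ^ (1 / Q) ≤ ∑' k, (∫⁻ t, u k t ^ Q ∂ν) ^ (1 / Q) :=
          lintegral_rpow_tsum_le ν hQ fun k => (hu k).aemeasurable
      _ = ∑' k, (∫⁻ t in Ioi 0, w t * u k t ^ Q) ^ (1 / Q) :=
          tsum_congr fun k => by rw [hν (hu k)]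

noncomputable def hardyConst (p : ℝ≥0∞) : ℝ≥0∞ :=
  ∑' k : ℕ, ENNReal.ofReal (2⁻¹ ^ (k + 1)) * ENNReal.ofReal ((2⁻¹ ^ (k + 1)) ^ (-(1 / p.toReal)))

lemma hardyConst_lt_top (hp : 1 < p) : hardyConst p < ⊤ := by
  set δ := 1 / p.toReal
  have hδ : δ < 1 := by
    rcases eq_or_ne p ⊤ with rfl | hptop
    · simp [δ]
    · have hP : 1 < p.toReal := by
        simpa using (ENNReal.toReal_lt_toReal ENNReal.one_ne_top hptop).2 hp
      exact (div_lt_one (by linarith)).2 hP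
  set ρ : ℝ := 2⁻¹ ^ (1 - δ)
  have hρ : ρ < 1 := Real.rpow_lt_one (by norm_num) (by norm_num) (by linarith)
  have hterm (k : ℕ) : ENNReal.ofReal (2⁻¹ ^ (k + 1)) * ENNReal.ofReal ((2⁻¹ ^ (k + 1)) ^ (-δ))
      = ENNReal.ofReal ρ ^ (k + 1) := by
    rw [← ENNReal.ofReal_mul (by positivity), ← ENNReal.ofReal_pow (by positivity),
      Real.rpow_pow_comm (by norm_num), ← Real.rpow_one_add' (by positivity) (by linarith),
      ← sub_eq_add_neg]
  calc hardyConst p = ∑' k : ℕ, ENNReal.ofReal ρ ^ (k + 1) := tsum_congr hterm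
    _ = ENNReal.ofReal ρ * ∑' k : ℕ, ENNReal.ofReal ρ ^ k := by
        simp_rw [pow_succ', ENNReal.tsum_mul_left]
    _ < ⊤ := ENNReal.mul_lt_top ENNReal.ofReal_lt_top <| by
        rw [ENNReal.tsum_geometric]
        exact ENNReal.inv_lt_top.2 (tsub_pos_of_lt (ENNReal.ofReal_lt_one.2 hρ))

/-- Hardy's inequality in Lorentz form. -/
lemma lorentzFun_hardyAvg_le (hq : 1 ≤ q) (hm : Measurable h) (hh : AntitoneOn h (Ioi 0)) :
    lorentzFun p q (hardyAvg h) ≤ hardyConst p * lorentzFun p q h := by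
  have hq0 : q ≠ 0 := (zero_lt_one.trans_le hq).ne'
  set a : ℕ → ℝ := fun k => 2⁻¹ ^ (k + 1)
  calc lorentzFun p q (hardyAvg h)
      ≤ lorentzFun p q (fun t => ∑' k, ENNReal.ofReal (a k) * h (a k * t)) :=
        lorentzFun_mono fun t ht => hardyAvg_le_tsum hh ht
    _ ≤ ∑' k, lorentzFun p q (fun t => ENNReal.ofReal (a k) * h (a k * t)) :=
        lorentzFun_tsum_le hq fun k => measurable_const.mul (hm.comp (measurable_const_mul _))
    _ ≤ ∑' k, ENNReal.ofReal (a k) *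
          (ENNReal.ofReal (a k ^ (-(1 / p.toReal))) * lorentzFun p q h) :=
        ENNReal.tsum_le_tsum fun k => by
          rw [lorentzFun_const_mul hq0 ENNReal.ofReal_ne_top (fun t => h (a k * t))]
          exact mul_le_mul_right (lorentzFun_comp_const_mul_le hq0 (by positivity) h) _
    _ = hardyConst p * lorentzFun p q h := by
        simp_rw [← mul_assoc]
        rw [ENNReal.tsum_mul_right, hardyConst]

lemma lorentzFun_le_mul_hardyAvg (hq : 1 ≤ q) {C : ℝ≥0∞} (hC : C ≠ ⊤)
    (hle : ∀ t, 0 < t → h₁ t ≤ C * hardyAvg h₂ t) (hm : Measurable h₂)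
    (hh : AntitoneOn h₂ (Ioi 0)) :
    lorentzFun p q h₁ ≤ C * hardyConst p * lorentzFun p q h₂ :=
  calc lorentzFun p q h₁ ≤ lorentzFun p q fun t => C * hardyAvg h₂ t := lorentzFun_mono hle
    _ = C * lorentzFun p q (hardyAvg h₂) :=
        lorentzFun_const_mul (zero_lt_one.trans_le hq).ne' hC _
    _ ≤ C * hardyConst p * lorentzFun p q h₂ := by
        rw [mul_assoc]
        exact mul_le_mul_right (lorentzFun_hardyAvg_le hq hm hh) _

end LorentzFun

section Rearrangement

variable {X : Type*} [MeasurableSpace X] {μ : Measure X} {f : X → ℝ}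

lemma rearr_antitone (μ : Measure X) (f : X → ℝ) : Antitone (rearr μ f) := fun _ _ hab =>
  sInf_le_sInf fun _ hs => hs.trans (ENNReal.ofReal_le_ofReal hab)

lemma measure_lt_le_of_rearr_lt {t : ℝ} {u : ℝ≥0∞} (h : rearr μ f t < u) :
    μ {x | u < ENNReal.ofReal |f x|} ≤ ENNReal.ofReal t := by
  obtain ⟨v, hv, hvu⟩ := sInf_lt_iff.1 h
  exact (measure_mono fun x hx => hvu.trans hx).trans hv

lemma rearr_le_of_measure_lt_le {t : ℝ} {u : ℝ≥0∞}
    (h : μ {x | u < ENNReal.ofReal |f x|} ≤ ENNReal.ofReal t) : rearr μ f t ≤ u :=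
  sInf_le h

lemma le_rearr_of_lt_measure {c : ℝ≥0∞} {w : ℝ}
    (hw : ENNReal.ofReal w < μ {x | c < ENNReal.ofReal |f x|}) : c ≤ rearr μ f w :=
  le_sInf fun v (hv : μ {x | v < ENNReal.ofReal |f x|} ≤ ENNReal.ofReal w) => by
    by_contra! hvc
    exact absurd hw (not_lt.2 ((measure_mono fun x (hx : c < _) => hvc.trans hx).trans hv))

lemma measure_lt_le_volume_le_rearr {c : ℝ≥0∞} {s : ℝ} (hs : 0 ≤ s)
    (hc : μ {x | c < ENNReal.ofReal |f x|} ≤ ENNReal.ofReal s) :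
    μ {x | c < ENNReal.ofReal |f x|} ≤ volume ({w | c ≤ rearr μ f w} ∩ Ioc 0 s) := by
  set m := μ {x | c < ENNReal.ofReal |f x|}
  have hm : m ≠ ⊤ := ne_top_of_le_ne_top ENNReal.ofReal_ne_top hc
  calc m = volume (Ioo 0 m.toReal) := by rw [Real.volume_Ioo, sub_zero, ENNReal.ofReal_toReal hm]
    _ ≤ volume ({w | c ≤ rearr μ f w} ∩ Ioc 0 s) := measure_mono fun w hw =>
        ⟨le_rearr_of_lt_measure ((ENNReal.ofReal_lt_iff_lt_toReal hw.1.le hm).2 hw.2),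
          hw.1, hw.2.le.trans (ENNReal.toReal_le_of_le_ofReal hs hc)⟩

lemma lintegral_sub_rearr_le (hf : Measurable f) {s : ℝ} (hs : 0 < s)
    (hτ : rearr μ f s ≠ ⊤) :
    ∫⁻ x, ENNReal.ofReal (|f x| - (rearr μ f s).toReal) ∂μ ≤ ∫⁻ w in Ioc 0 s, rearr μ f w := by
  set T := (rearr μ f s).toReal
  have hlayer := lintegral_eq_lintegral_meas_lt μ (f := fun x => max (|f x| - T) 0)
    (ae_of_all _ fun x => le_max_right _ _) ((hf.abs.sub_const T).max measurable_const).aemeasurable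
  simp only [ENNReal.ofReal_max, ENNReal.ofReal_zero, max_zero] at hlayer
  rw [hlayer]
  calc ∫⁻ u in Ioi 0, μ {x | u < max (|f x| - T) 0}
      ≤ ∫⁻ u in Ioi 0, volume.restrict (Ioc 0 s) {w | ENNReal.ofReal u ≤ rearr μ f w} :=
        setLIntegral_mono' measurableSet_Ioi fun u (hu : 0 < u) => by
          have hT : rearr μ f s < ENNReal.ofReal (T + u) := by
            rw [← ENNReal.ofReal_toReal hτ, ENNReal.ofReal_lt_ofReal_iff_of_nonneg
              ENNReal.toReal_nonneg]
            linarith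
          calc μ {x | u < max (|f x| - T) 0}
              ≤ μ {x | ENNReal.ofReal (T + u) < ENNReal.ofReal |f x|} := measure_mono fun x hx => by
                have : u < |f x| - T := (lt_max_iff.1 hx).resolve_right (not_lt.2 hu.le)
                exact (ENNReal.ofReal_lt_ofReal_iff_of_nonneg (by positivity)).2 (by linarith)
            _ ≤ volume ({w | ENNReal.ofReal (T + u) ≤ rearr μ f w} ∩ Ioc 0 s) :=
                measure_lt_le_volume_le_rearr hs.le (measure_lt_le_of_rearr_lt hT)
            _ ≤ volume.restrict (Ioc 0 s) {w | ENNReal.ofReal u ≤ rearr μ f w} := by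
                rw [Measure.restrict_apply' measurableSet_Ioc]
                exact measure_mono (inter_subset_inter_left _ fun w hw =>
                  (ENNReal.ofReal_le_ofReal (le_add_of_nonneg_left ENNReal.toReal_nonneg)).trans hw)
    _ ≤ ∫⁻ w in Ioc 0 s, rearr μ f w :=
        lintegral_Ioi_measure_le_le _ (rearr_antitone μ f).measurable

end Rearrangement

section Metric

variable {X : Type*} [PseudoMetricSpace X]

lemma exists_separated_subset_covering (s : Set X) {ε : ℝ} (hε : 0 ≤ ε) :
    ∃ N ⊆ s, N.Pairwise (fun x y => ε < dist x y) ∧ s ⊆ ⋃ y ∈ N, closedBall y ε := by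
  obtain ⟨N, -, hN⟩ := zorn_subset_nonempty {N | N ⊆ s ∧ IsSeparated (ENNReal.ofReal ε) N}
    (fun c hc hchain _ => ⟨⋃₀ c, ⟨sUnion_subset fun N hN => (hc hN).1,
      (pairwise_sUnion hchain.directedOn).2 fun N hN => (hc hN).2⟩,
      fun N hN => subset_sUnion_of_mem hN⟩) ∅ ⟨empty_subset s, IsSeparated.empty⟩
  refine ⟨N, hN.prop.1, fun x hx y hy hxy => ?_, ?_⟩
  · have hsep : ENNReal.ofReal ε < edist x y := hN.prop.2 hx hy hxy
    rwa [edist_dist, ENNReal.ofReal_lt_ofReal_iff_of_nonneg hε] at hsep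
  · have hcover := IsCover.of_maximal_isSeparated (ε := ε.toNNReal) hN
    rw [isCover_iff_subset_iUnion_closedEBall] at hcover
    simpa only [closedEBall_coe, Real.coe_toNNReal _ hε] using hcover

variable [MeasurableSpace X]

lemma ofReal_abs_avgOp_le (μ : Measure X) (r : ℝ) (f : X → ℝ) (T : ℝ) (x : X) :
    ENNReal.ofReal |avgOp μ r f x|
      ≤ (μ (closedBall x r))⁻¹ * ∫⁻ y in closedBall x r, ENNReal.ofReal (|f y| - T) ∂μ
        + ENNReal.ofReal T := by
  set B := closedBall x r
  calc ENNReal.ofReal |avgOp μ r f x|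
      ≤ (μ B)⁻¹ * ∫⁻ y in B, ENNReal.ofReal |f y| ∂μ := by
        rw [avgOp, abs_mul, abs_of_nonneg (inv_nonneg.2 ENNReal.toReal_nonneg),
          ENNReal.ofReal_mul (inv_nonneg.2 ENNReal.toReal_nonneg), ← ENNReal.toReal_inv]
        gcongr
        · exact ENNReal.ofReal_toReal_le
        · simpa only [Real.enorm_eq_ofReal_abs] using enorm_integral_le_lintegral_enorm f
    _ ≤ (μ B)⁻¹ * (∫⁻ y in B, ENNReal.ofReal (|f y| - T) ∂μ + ENNReal.ofReal T * μ B) := by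
        rw [← setLIntegral_const, ← lintegral_add_right _ measurable_const]
        gcongr with y
        simpa using ENNReal.ofReal_add_le (p := |f y| - T) (q := T)
    _ ≤ (μ B)⁻¹ * ∫⁻ y in B, ENNReal.ofReal (|f y| - T) ∂μ + ENNReal.ofReal T := by
        rw [mul_add, mul_left_comm]
        gcongr
        exact mul_le_of_le_one_right zero_le (ENNReal.inv_mul_le_one _)

variable [OpensMeasurableSpace X]

/-- Weak type `(1,1)` of `ν ↦ ν(B(·,r)) / μ(B(·,r))`. -/
lemma mul_measure_lt_measure_closedBall_le (μ ν : Measure X) [SFinite ν] {r : ℝ} (hr : 0 ≤ r)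
    {C : ℝ≥0∞} (hC : ∀ x, μ (closedBall x (2 * r)) ≤ C * μ (closedBall x r)) (β : ℝ≥0∞) :
    β * μ {x | β * μ (closedBall x r) < ν (closedBall x r)} ≤ C * ν univ := by
  set E := {x | β * μ (closedBall x r) < ν (closedBall x r)}
  obtain ⟨M, hME, hMsep, hcover⟩ := exists_separated_subset_covering E (by positivity : 0 ≤ 2 * r)
  have hdisj : M.PairwiseDisjoint (closedBall · r) := fun y hy z hz hyz =>
    closedBall_disjoint_closedBall (by linarith [hMsep hy hz hyz])
  have hcount : M.Countable := by
    have hpos := Measure.countable_meas_pos_of_disjoint_iUnion (μ := ν)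
      (As := fun y : M => closedBall (y : X) r) (fun _ => measurableSet_closedBall)
      fun y z hyz => hdisj y.2 z.2 (Subtype.coe_ne_coe.2 hyz)
    rw [← Set.countable_coe_iff, ← Set.countable_univ_iff]
    convert hpos using 1
    refine (eq_univ_of_forall fun y : M => ?_).symm
    exact zero_le.trans_lt
      (show β * μ (closedBall (y : X) r) < ν (closedBall (y : X) r) from hME y.2)
  calc β * μ E ≤ β * ∑' y : M, μ (closedBall (y : X) (2 * r)) :=
        mul_le_mul_right ((measure_mono hcover).trans (measure_biUnion_le μ hcount _)) _
    _ ≤ ∑' y : M, C * (β * μ (closedBall (y : X) r)) := by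
        rw [← ENNReal.tsum_mul_left]
        exact ENNReal.tsum_le_tsum fun y => by
          rw [mul_left_comm]
          exact mul_le_mul_right (hC y) _
    _ ≤ C * ∑' y : M, ν (closedBall (y : X) r) := by
        rw [← ENNReal.tsum_mul_left]
        exact ENNReal.tsum_le_tsum fun y => mul_le_mul_right (hME y.2).le _
    _ ≤ C * ν univ := by
        rw [← measure_biUnion hcount hdisj fun _ _ => measurableSet_closedBall]
        exact mul_le_mul_right (measure_mono (subset_univ _)) _

lemma setOf_add_lt_abs_avgOp_subset (μ : Measure X) (r : ℝ) (f : X → ℝ) (T : ℝ) (β : ℝ≥0∞) :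
    {x | ENNReal.ofReal T + β < ENNReal.ofReal |avgOp μ r f x|}
      ⊆ {x | β * μ (closedBall x r)
          < μ.withDensity (fun y => ENNReal.ofReal (|f y| - T)) (closedBall x r)} := fun x hx => by
  have hpt := ofReal_abs_avgOp_le μ r f T x
  rw [← withDensity_apply _ measurableSet_closedBall] at hpt
  refine ENNReal.mul_lt_of_lt_div ?_
  rw [ENNReal.div_eq_inv_mul, ← ENNReal.add_lt_add_iff_right ENNReal.ofReal_ne_top, add_comm]
  exact lt_of_lt_of_le hx hpt

lemma rearr_avgOp_le (μ : Measure X) {r γ : ℝ} (hr : 0 ≤ r) (hγ0 : 0 < γ)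
    (hγ : ∀ x, μ (closedBall x (2 * r)) ≤ ENNReal.ofReal γ * μ (closedBall x r))
    {f : X → ℝ} (hf : Measurable f) {s : ℝ} (hs : 0 < s) :
    rearr μ (avgOp μ r f) s ≤ ENNReal.ofReal (1 + γ) * rearr2 μ f s := by
  set C := ENNReal.ofReal γ
  set F := rearr2 μ f s
  have hτF : rearr μ f s ≤ F := le_hardyAvg ((rearr_antitone μ f).antitoneOn _) hs
  rw [ENNReal.ofReal_add zero_le_one hγ0.le, ENNReal.ofReal_one, add_mul, one_mul]
  rcases eq_or_ne F ⊤ with hF | hF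
  · simp [hF]
  have hτ : rearr μ f s ≠ ⊤ := ne_top_of_le_ne_top hF hτF
  set T := (rearr μ f s).toReal
  set ν := μ.withDensity fun y => ENNReal.ofReal (|f y| - T)
  have hν : ν univ ≤ ENNReal.ofReal s * F := by
    rw [withDensity_apply _ MeasurableSet.univ, Measure.restrict_univ]
    refine (lintegral_sub_rearr_le hf hs hτ).trans_eq ?_
    rw [show F = (ENNReal.ofReal s)⁻¹ * ∫⁻ w in Ioc 0 s, rearr μ f w from rfl, ← mul_assoc,
      ENNReal.mul_inv_cancel (by simpa using hs) ENNReal.ofReal_ne_top, one_mul]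
  have : IsFiniteMeasure ν := ⟨hν.trans_lt (ENNReal.mul_lt_top ENNReal.ofReal_lt_top hF.lt_top)⟩
  have hE : μ {x | C * F * μ (closedBall x r) < ν (closedBall x r)} ≤ ENNReal.ofReal s := by
    rcases eq_or_ne F 0 with hF0 | hF0
    · have hν0 : ν univ = 0 := by simpa [hF0] using hν
      refine le_of_eq_of_le (measure_eq_zero_iff_ae_notMem.2 (ae_of_all _ fun x (hx : _ < _) =>
        (zero_le.trans_lt hx).ne' (measure_mono_null (subset_univ _) hν0))) zero_le
    · have hβ0 : C * F ≠ 0 := mul_ne_zero (ENNReal.ofReal_pos.2 hγ0).ne' hF0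
      refine (ENNReal.mul_le_mul_iff_right hβ0 (ENNReal.mul_ne_top ENNReal.ofReal_ne_top hF)).1 ?_
      calc C * F * μ _ ≤ C * ν univ := mul_measure_lt_measure_closedBall_le μ ν hr hγ _
        _ ≤ C * (ENNReal.ofReal s * F) := mul_le_mul_right hν _
        _ = C * F * ENNReal.ofReal s := by ring
  calc rearr μ (avgOp μ r f) s ≤ rearr μ f s + C * F := by
        refine rearr_le_of_measure_lt_le ((measure_mono ?_).trans hE)
        simpa only [T, ENNReal.ofReal_toReal hτ] using
          setOf_add_lt_abs_avgOp_subset μ r f T (C * F)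
    _ ≤ F + C * F := by gcongr

lemma lorentzNorm_avgOp_le (μ : Measure X) {r γ : ℝ} (hr : 0 ≤ r) (hγ0 : 0 < γ)
    (hγ : ∀ x, μ (closedBall x (2 * r)) ≤ ENNReal.ofReal γ * μ (closedBall x r))
    {f : X → ℝ} (hf : Measurable f) {p q : ℝ≥0∞} (hq : 1 ≤ q) :
    lorentzNorm μ (avgOp μ r f) p q
      ≤ ENNReal.ofReal (1 + γ) * hardyConst p * lorentzNorm μ f p q := by
  rw [lorentzNorm_eq_lorentzFun, lorentzNorm_eq_lorentzFun]
  exact lorentzFun_le_mul_hardyAvg hq ENNReal.ofReal_ne_top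
    (fun t ht => rearr_avgOp_le μ hr hγ0 hγ hf ht) (rearr_antitone μ f).measurable
    ((rearr_antitone μ f).antitoneOn _)

lemma lorentzNorm'_avgOp_le (μ : Measure X) {r γ : ℝ} (hr : 0 ≤ r) (hγ0 : 0 < γ)
    (hγ : ∀ x, μ (closedBall x (2 * r)) ≤ ENNReal.ofReal γ * μ (closedBall x r))
    {f : X → ℝ} (hf : Measurable f) {p q : ℝ≥0∞} (hq : 1 ≤ q) :
    lorentzNorm' μ (avgOp μ r f) p q
      ≤ ENNReal.ofReal (1 + γ) * hardyConst p * lorentzNorm' μ f p q := by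
  rw [lorentzNorm'_eq_lorentzFun, lorentzNorm'_eq_lorentzFun]
  refine lorentzFun_le_mul_hardyAvg hq ENNReal.ofReal_ne_top (fun t _ => ?_)
    (measurable_hardyAvg _) (hardyAvg_antitoneOn ((rearr_antitone μ f).antitoneOn _))
  exact (hardyAvg_mono (fun s hs => rearr_avgOp_le μ hr hγ0 hγ hf hs) t).trans_eq
    (hardyAvg_const_mul ENNReal.ofReal_ne_top _ t)

end Metric

end Lorentz

open Lorentz

theorem statement_9_general {X : Type*} [MetricSpace X] [MeasurableSpace X] [BorelSpace X]
    (μ : Measure X)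
    (r : ℝ) (hr : 0 < r)
    (hdbl : ∀ s : ℝ, r ≤ s → DoublingAt μ s)
    (p q : ENNReal) (hp : 1 < p) (hq : 1 ≤ q) :
    ∃ c : ℝ, 2 ≤ c ∧ ∀ f : X → ℝ, Measurable f → lorentzNorm μ f p q < ⊤ →
      lorentzNorm μ (avgOp μ r f) p q ≤
        ENNReal.ofReal c * (if p = ⊤ then 1 else p / (p - 1)) * lorentzNorm μ f p q ∧
      lorentzNorm' μ (avgOp μ r f) p q ≤
        ENNReal.ofReal c * (if p = ⊤ then 1 else p / (p - 1)) * lorentzNorm' μ f p q ∧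
      lorentzNorm μ (avgOp μ r f) p q < ⊤ := by
  obtain ⟨γ, hγ1, hγ⟩ := hdbl r le_rfl
  set K := ENNReal.ofReal (1 + γ) * hardyConst p
  have hK : K < ⊤ := ENNReal.mul_lt_top ENNReal.ofReal_lt_top (hardyConst_lt_top hp)
  have hKc : K ≤ ENNReal.ofReal (max 2 K.toReal) * (if p = ⊤ then 1 else p / (p - 1)) :=
    (ENNReal.le_ofReal_iff_toReal_le hK.ne (by positivity)).2 (le_max_right _ _) |>.trans
      (le_mul_of_one_le_right zero_le (one_le_ite_div_tsub (zero_lt_one.trans hp).ne'))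
  refine ⟨max 2 K.toReal, le_max_left _ _, fun f hf hfin => ?_⟩
  have h₁ := lorentzNorm_avgOp_le μ hr.le (by linarith) hγ hf (p := p) hq
  have h₂ := lorentzNorm'_avgOp_le μ hr.le (by linarith) hγ hf (p := p) hq
  exact ⟨h₁.trans (mul_le_mul_left hKc _), h₂.trans (mul_le_mul_left hKc _),
    h₁.trans_lt (ENNReal.mul_lt_top hK hfin)⟩

/-- If `X` is `s`-doubling and has the Vitali covering property for all
`s ≥ r`, and `1 < p ≤ ∞`, `1 ≤ q ≤ ∞`, there is `c ≥ 2` such that for every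
`f ∈ L^{p,q}(X)`, `‖A_r f‖_{p,q} ≤ (cp/(p−1)) ‖f‖_{p,q}` and
`‖A_r f‖_{(p,q)} ≤ (cp/(p−1)) ‖f‖_{(p,q)}` (with `p/(p−1)` read as `1` for `p = ∞`);
in particular `A_r` maps `L^{p,q}(X)` into itself. -/
theorem statement_9 {X : Type*} [MetricSpace X] [MeasurableSpace X] [BorelSpace X]
    (μ : Measure X)
    (hball : ∀ (x : X) (s : ℝ), 0 < s → 0 < μ (closedBall x s) ∧ μ (closedBall x s) < ⊤)
    (r : ℝ) (hr : 0 < r)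
    (hdbl : ∀ s : ℝ, r ≤ s → DoublingAt μ s)
    (hvitali : VitaliCoveringProperty X μ)
    (p q : ENNReal) (hp : 1 < p) (hq : 1 ≤ q) :
    ∃ c : ℝ, 2 ≤ c ∧ ∀ f : X → ℝ, Measurable f → lorentzNorm μ f p q < ⊤ →
      lorentzNorm μ (avgOp μ r f) p q ≤
        ENNReal.ofReal c * (if p = ⊤ then 1 else p / (p - 1)) * lorentzNorm μ f p q ∧
      lorentzNorm' μ (avgOp μ r f) p q ≤
        ENNReal.ofReal c * (if p = ⊤ then 1 else p / (p - 1)) * lorentzNorm' μ f p q ∧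
      lorentzNorm μ (avgOp μ r f) p q < ⊤ :=
  statement_9_general μ r hr hdbl p q hp hq
end
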